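/- arXiv:1904.04494 — 8 statements merged into one kernel-verified Lean document; each statement's English description precedes it below -/
import Mathlib

section
/- Let K be a field, q ≥ 1 an integer, and f(z) = z(1 + Σ_{j≥q} a_j z^j) a formal power series over K with a_q ≠ 0. Then the residue fixed point index ind(f) (the coefficient of 1/z in the Laurent expansion of 1/(z − f(z))) equals the coefficient of z^q in Σ_{r=0}^{q} a_q^{r-q-1} (−1)^{q−r+1} (a_{q+1} z + a_{q+2} z^2 + ⋯ + a_{2q} z^q)^{q−r}. -/
/-- Residue fixed point index: coefficient of 1/z in the Laurent expansion of 1/(z - f(z)). -/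
noncomputable def ind {K : Type*} [Field K] (f : PowerSeries K) : K :=
  (((HahnSeries.ofPowerSeries ℤ K) (PowerSeries.X - f) : LaurentSeries K)⁻¹).coeff (-1)

/-- Composition of formal power series: `pcomp f g = f ∘ g` (valid when `g` has zero
constant term). -/
noncomputable def pcomp {R : Type*} [CommRing R] (f g : PowerSeries R) : PowerSeries R :=
  PowerSeries.mk fun n =>
    ∑ k ∈ Finset.range (n + 1), PowerSeries.coeff k f * PowerSeries.coeff n (g ^ k)

/-- n-fold compositional iterate of a power series. -/
noncomputable def piter {R : Type*} [CommRing R] (f : PowerSeries R) : ℕ → PowerSeries R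
  | 0 => PowerSeries.X
  | n + 1 => pcomp f (piter f n)

theorem stmt0 {K : Type*} [Field K] (q : ℕ) (hq : 1 ≤ q) (a : ℕ → K) (haq : a q ≠ 0)
    (f : PowerSeries K)
    (hf : ∀ n, PowerSeries.coeff n f =
      if n = 1 then 1 else if q + 1 ≤ n then a (n - 1) else 0) :
    ind f = PowerSeries.coeff q
      (∑ r ∈ Finset.range (q + 1),
        PowerSeries.C ((-1 : K) ^ (q - r + 1) * (a q) ^ r / (a q) ^ (q + 1)) *
          (∑ i ∈ Finset.Icc 1 q, PowerSeries.C (a (q + i)) * PowerSeries.X ^ i)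
            ^ (q - r)) := by
  classical
  set A := a q with hA
  set S : PowerSeries K := ∑ i ∈ Finset.Icc 1 q, PowerSeries.C (a (q + i)) * PowerSeries.X ^ i
    with hSdef
  set u : PowerSeries K := PowerSeries.mk (fun m => a (q + m)) with hudef
  have hu0 : PowerSeries.constantCoeff u = A := by
    simp [hudef, hA, ← PowerSeries.coeff_zero_eq_constantCoeff_apply]
  have hu0' : PowerSeries.constantCoeff u ≠ 0 := by rw [hu0]; exact haq
  have huinv : u * u⁻¹ = 1 := PowerSeries.mul_inv_cancel u hu0'
  -- Step 1 : X - f = -(u * X^(q+1))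
  have hXf : PowerSeries.X - f = -(u * PowerSeries.X ^ (q + 1)) := by
    ext n
    rw [map_neg, map_sub, PowerSeries.coeff_X, hf, PowerSeries.coeff_mul_X_pow']
    rcases le_or_gt (q + 1) n with h | h
    · have hn1 : n ≠ 1 := by omega
      simp only [if_neg hn1, if_pos h, hudef, PowerSeries.coeff_mk]
      have : q + (n - (q + 1)) = n - 1 := by omega
      rw [this]; ring_nf
    · have hn : ¬ q + 1 ≤ n := by omega
      simp only [if_neg hn]
      rcases eq_or_ne n 1 with rfl | hn1
      · simp
      · simp [hn1]
  -- Step 2 : Laurent series inverse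
  have hind : ind f = -(PowerSeries.coeff q u⁻¹) := by
    have hone : ((HahnSeries.ofPowerSeries ℤ K) (PowerSeries.X - f) : LaurentSeries K) *
        (-(HahnSeries.single (-(q + 1 : ℤ)) (1 : K) *
          (HahnSeries.ofPowerSeries ℤ K) u⁻¹)) = 1 := by
      rw [hXf, map_neg, map_mul, HahnSeries.ofPowerSeries_X_pow]
      have key : HahnSeries.single ((q + 1 : ℕ) : ℤ) (1 : K) *
          HahnSeries.single (-(q + 1 : ℤ)) (1 : K) = 1 := by
        rw [HahnSeries.single_mul_single, mul_one,
          show ((q + 1 : ℕ) : ℤ) + -(q + 1 : ℤ) = 0 by push_cast; ring,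
          HahnSeries.single_zero_one]
      have key2 : (HahnSeries.ofPowerSeries ℤ K) u * (HahnSeries.ofPowerSeries ℤ K) u⁻¹ = 1 := by
        rw [← map_mul, huinv, map_one]
      linear_combination ((HahnSeries.ofPowerSeries ℤ K) u *
        (HahnSeries.ofPowerSeries ℤ K) u⁻¹) * key + key2
    have hinv := inv_eq_of_mul_eq_one_right hone
    rw [ind, hinv]
    rw [HahnSeries.coeff_neg]
    congr 1
    rw [show (-1 : ℤ) = (q : ℤ) + -(q + 1 : ℤ) by ring]
    rw [HahnSeries.coeff_single_mul_add, one_mul, HahnSeries.ofPowerSeries_apply_coeff]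
  -- Step 3 : geometric series identity
  set w : PowerSeries K := -(PowerSeries.C A⁻¹ * S) with hwdef
  set v : PowerSeries K := ∑ s ∈ Finset.range (q + 1),
      PowerSeries.C ((-1 : K) ^ s / A ^ (s + 1)) * S ^ s with hvdef
  have hCA : PowerSeries.C A * PowerSeries.C A⁻¹ = 1 := by
    rw [← map_mul, mul_inv_cancel₀ haq, map_one]
  have hv_eq : v = PowerSeries.C A⁻¹ * ∑ s ∈ Finset.range (q + 1), w ^ s := by
    rw [hvdef, Finset.mul_sum]
    refine Finset.sum_congr rfl fun s _ => ?_
    have hx : w = PowerSeries.C (-A⁻¹) * S := by rw [hwdef, map_neg, neg_mul]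
    rw [hx, mul_pow, ← map_pow, ← mul_assoc, ← map_mul]
    congr 1
    rw [show (-A⁻¹ : K) = (-1) * A⁻¹ by ring, mul_pow, inv_pow, div_eq_mul_inv,
      pow_succ, mul_inv]
    ring
  have hCAS : PowerSeries.C A + S = PowerSeries.C A * (1 - w) := by
    rw [hwdef]
    linear_combination (-S) * hCA
  have hgeom : (1 - w) * ∑ s ∈ Finset.range (q + 1), w ^ s = 1 - w ^ (q + 1) := by
    have := mul_geom_sum w (q + 1)
    linear_combination -this
  have h1 : (PowerSeries.C A + S) * v = 1 - w ^ (q + 1) := by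
    rw [hCAS, hv_eq, show PowerSeries.C A * (1 - w) *
      (PowerSeries.C A⁻¹ * ∑ s ∈ Finset.range (q + 1), w ^ s) =
      (PowerSeries.C A * PowerSeries.C A⁻¹) *
        ((1 - w) * ∑ s ∈ Finset.range (q + 1), w ^ s) by ring, hCA, one_mul, hgeom]
  -- Step 4 : divisibility facts
  have hXS : (PowerSeries.X : PowerSeries K) ∣ S := by
    rw [hSdef]
    refine Finset.dvd_sum fun i hi => ?_
    rw [Finset.mem_Icc] at hi
    exact Dvd.dvd.mul_left (dvd_pow_self _ (by omega : i ≠ 0)) _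
  have hXw : (PowerSeries.X : PowerSeries K) ∣ w := by
    rw [hwdef]; exact dvd_neg.2 (hXS.mul_left _)
  have hXwpow : (PowerSeries.X : PowerSeries K) ^ (q + 1) ∣ w ^ (q + 1) :=
    pow_dvd_pow_of_dvd hXw _
  have hE : (PowerSeries.X : PowerSeries K) ^ (q + 1) ∣ (u - (PowerSeries.C A + S)) := by
    rw [PowerSeries.X_pow_dvd_iff]
    intro m hm
    have hmq : m ≤ q := by omega
    rw [map_sub, map_add, hudef, PowerSeries.coeff_mk, PowerSeries.coeff_C, hSdef]
    have hScoeff : (PowerSeries.coeff m) (∑ i ∈ Finset.Icc 1 q,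
        PowerSeries.C (a (q + i)) * PowerSeries.X ^ i) =
        if m ∈ Finset.Icc 1 q then a (q + m) else 0 := by
      rw [map_sum]
      rw [Finset.sum_congr rfl (fun i _ => by
        rw [PowerSeries.coeff_C_mul, PowerSeries.coeff_X_pow, mul_ite, mul_one, mul_zero])]
      simp [Finset.sum_ite_eq' (Finset.Icc 1 q) m (fun i => a (q + i))]
    rw [hScoeff]
    rcases Nat.eq_zero_or_pos m with rfl | hm1
    · simp [hA]
    · rw [if_neg (by omega), if_pos (Finset.mem_Icc.2 ⟨hm1, hmq⟩)]; ring_nf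
  have hdvd : (PowerSeries.X : PowerSeries K) ^ (q + 1) ∣ (u⁻¹ - v) := by
    have hmul : u * (u⁻¹ - v) = w ^ (q + 1) - (u - (PowerSeries.C A + S)) * v := by
      have : u * v = (PowerSeries.C A + S) * v + (u - (PowerSeries.C A + S)) * v := by ring
      rw [mul_sub, huinv, this, h1]; ring
    have hd : (PowerSeries.X : PowerSeries K) ^ (q + 1) ∣ u * (u⁻¹ - v) := by
      rw [hmul]; exact dvd_sub hXwpow (hE.mul_right v)
    have : u⁻¹ - v = u⁻¹ * (u * (u⁻¹ - v)) := by
      rw [← mul_assoc, mul_comm u⁻¹ u, huinv, one_mul]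
    rw [this]
    exact hd.mul_left _
  have hcoeff : PowerSeries.coeff q u⁻¹ = PowerSeries.coeff q v := by
    have := (PowerSeries.X_pow_dvd_iff.1 hdvd) q (by omega)
    rw [map_sub, sub_eq_zero] at this
    exact this
  -- Step 5 : RHS = coeff q (-v)
  have hsum : (∑ r ∈ Finset.range (q + 1),
      PowerSeries.C ((-1 : K) ^ (q - r + 1) * A ^ r / A ^ (q + 1)) * S ^ (q - r)) = -v := by
    rw [← Finset.sum_range_reflect]
    rw [hvdef, ← Finset.sum_neg_distrib]
    refine Finset.sum_congr rfl fun s hs => ?_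
    rw [Finset.mem_range] at hs
    have hsq : s ≤ q := by omega
    have h1 : q + 1 - 1 - s = q - s := by omega
    have h2 : q - (q - s) = s := Nat.sub_sub_self hsq
    rw [h1, h2]
    rw [show (-1 : K) ^ (s + 1) * A ^ (q - s) / A ^ (q + 1) = -((-1) ^ s / A ^ (s + 1)) by
      have hpow : A ^ (q - s) * A ^ (s + 1) = A ^ (q + 1) := by
        rw [← pow_add]; congr 1; omega
      field_simp
      rw [← hpow]; ring]
    rw [map_neg, neg_mul]
  rw [hind, hcoeff, hsum, map_neg]
end

section
/- Let K be a field, q ≥ 1 an integer, and f(z) = z(1 + Σ_{j≥q} a_j z^j) a formal power series over K with a_q ≠ 0. Then ind(f) = −(1/a_q^{q+1}) · Σ over multi-indices ι = (ι_0,…,ι_q) ∈ ℕ^{q+1} with ι_0+⋯+ι_q = q and ι_1 + 2ι_2 + ⋯ + qι_q = q, of (−1)^{q−ι_0} · (multinomial coefficient (q−ι_0 choose ι_1,…,ι_q)) · Π_{j=0}^{q} a_{q+j}^{ι_j}. -/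
open Finset PowerSeries

/-- Truncation lemma: if `g * w = 1 + r` with `X^(n+1) ∣ r`, then `coeff n g⁻¹ = coeff n w`. -/
lemma aux_inv_coeff {K : Type*} [Field K] (g w r : PowerSeries K)
    (hg : PowerSeries.constantCoeff g ≠ 0) (n : ℕ)
    (h : g * w = 1 + r) (hr : (PowerSeries.X : PowerSeries K) ^ (n + 1) ∣ r) :
    PowerSeries.coeff n g⁻¹ = PowerSeries.coeff n w := by
  have h2 : w = g⁻¹ + g⁻¹ * r := by
    calc w = (g⁻¹ * g) * w := by rw [PowerSeries.inv_mul_cancel g hg, one_mul]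
    _ = g⁻¹ * (1 + r) := by rw [mul_assoc, h]
    _ = g⁻¹ + g⁻¹ * r := by ring
  have hz : PowerSeries.coeff n (g⁻¹ * r) = 0 := by
    obtain ⟨t, rfl⟩ := hr
    have : g⁻¹ * (PowerSeries.X ^ (n + 1) * t) = PowerSeries.X ^ (n+1) * (g⁻¹ * t) := by ring
    rw [this]
    exact PowerSeries.X_pow_dvd_iff.mp ⟨_, rfl⟩ n (Nat.lt_succ_self n)
  rw [h2, map_add, hz, add_zero]

theorem stmt1 {K : Type*} [Field K] (q : ℕ) (hq : 1 ≤ q) (a : ℕ → K) (haq : a q ≠ 0)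
    (f : PowerSeries K)
    (hf : ∀ n, PowerSeries.coeff n f =
      if n = 1 then 1 else if q + 1 ≤ n then a (n - 1) else 0) :
    ind f = -(1 / (a q) ^ (q + 1)) *
      ∑ ι ∈ Finset.filter
          (fun ι => (∑ j : Fin (q + 1), ι j) = q ∧ (∑ j : Fin (q + 1), (j : ℕ) * ι j) = q)
          (Fintype.piFinset fun _ : Fin (q + 1) => Finset.range (q + 1)),
        (-1 : K) ^ (q - ι 0) * (Nat.multinomial (Finset.univ.erase 0) ι : K) *
          ∏ j : Fin (q + 1), a (q + (j : ℕ)) ^ ι j := by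
  classical
  set u := a q with hu
  set g : PowerSeries K := PowerSeries.mk (fun j => a (q + j)) with hgdef
  have hg0 : PowerSeries.constantCoeff g = u := by
    rw [← PowerSeries.coeff_zero_eq_constantCoeff_apply]
    simp [hgdef, hu]
  have hgne : PowerSeries.constantCoeff g ≠ 0 := by rw [hg0]; exact haq
  -- Step 1 : X - f = -(X^(q+1) * g)
  have hXf : PowerSeries.X - f = -((PowerSeries.X : PowerSeries K) ^ (q+1) * g) := by
    ext n
    rw [map_sub, hf n, map_neg, PowerSeries.coeff_X, PowerSeries.coeff_X_pow_mul' ]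
    rcases eq_or_ne n 1 with h1 | h1
    · subst h1
      have : ¬ (q + 1 ≤ 1) := by omega
      simp [this]
    · rw [if_neg h1, if_neg h1]
      by_cases h2 : q + 1 ≤ n
      · rw [if_pos h2, if_pos h2]
        have : q + (n - (q+1)) = n - 1 := by omega
        simp [hgdef, this]
      · rw [if_neg h2, if_neg h2]
        simp
  -- Step 2 : ind f = -(coeff q g⁻¹)
  have hginv : g * g⁻¹ = 1 := PowerSeries.mul_inv_cancel g hgne
  set W : LaurentSeries K :=
    -(HahnSeries.single (-(q+1 : ℤ)) (1:K) * (HahnSeries.ofPowerSeries ℤ K (g⁻¹))) with hWdef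
  have hmul : (HahnSeries.ofPowerSeries ℤ K (PowerSeries.X - f)) * W = 1 := by
    rw [hXf, map_neg, map_mul, map_pow, HahnSeries.ofPowerSeries_X, hWdef]
    have h1 : ((HahnSeries.single (1:ℤ) (1:K)) ^ (q+1)) * HahnSeries.single (-(q+1:ℤ)) 1
        = 1 := by
      rw [HahnSeries.single_pow, one_pow, HahnSeries.single_mul_single, mul_one]
      have h2 : (q+1) • (1:ℤ) + -(q+1 : ℤ) = 0 := by simp
      rw [h2]
      rfl
    calc -((HahnSeries.single (1:ℤ) (1:K)) ^ (q+1) * (HahnSeries.ofPowerSeries ℤ K) g) *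
        -(HahnSeries.single (-(q+1:ℤ)) 1 * (HahnSeries.ofPowerSeries ℤ K) g⁻¹)
        = ((HahnSeries.single (1:ℤ) (1:K)) ^ (q+1) * HahnSeries.single (-(q+1:ℤ)) 1) *
          ((HahnSeries.ofPowerSeries ℤ K) g * (HahnSeries.ofPowerSeries ℤ K) g⁻¹) := by ring
      _ = 1 := by rw [h1, ← map_mul, hginv, map_one, one_mul]
  have hA : ind f = -(PowerSeries.coeff q g⁻¹) := by
    unfold ind
    rw [inv_eq_of_mul_eq_one_right hmul, hWdef, HahnSeries.coeff_neg]
    congr 1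
    have h1 : (-1 : ℤ) = (q : ℤ) + -(q+1 : ℤ) := by ring
    rw [h1, HahnSeries.coeff_single_mul_add, HahnSeries.ofPowerSeries_apply_coeff, one_mul]
  -- Step 3 : combinatorics
  set s : Finset (Fin (q+1)) := Finset.univ.erase 0 with hsdef
  set c : Fin (q+1) → K := fun j => a (q + (j:ℕ)) / u with hcdef
  set P : PowerSeries K := ∑ j ∈ s, PowerSeries.C (c j) * PowerSeries.X ^ (j:ℕ) with hPdef
  have hP0 : PowerSeries.constantCoeff P = 0 := by
    rw [hPdef, map_sum]
    refine Finset.sum_eq_zero fun j hj => ?_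
    have hj0 : (j : ℕ) ≠ 0 := by
      intro h
      exact (Finset.mem_erase.mp hj).1 (Fin.ext (by simpa using h))
    simp [map_pow, PowerSeries.constantCoeff_X, zero_pow hj0]
  -- coefficients of P below q+1
  have hXP : (PowerSeries.X : PowerSeries K) ∣ P := PowerSeries.X_dvd_iff.mpr hP0
  -- t := g - C u * (1+P) is divisible by X^(q+1)
  have ht : (PowerSeries.X : PowerSeries K) ^ (q+1) ∣ (g - PowerSeries.C u * (1 + P)) := by
    rw [PowerSeries.X_pow_dvd_iff]
    intro m hm
    rw [map_sub, PowerSeries.coeff_C_mul, map_add]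
    have hPm : PowerSeries.coeff m P =
        if h : m = 0 then 0 else c ⟨m, hm⟩ := by
      rw [hPdef, map_sum]
      split_ifs with h
      · subst h
        refine Finset.sum_eq_zero fun j hj => ?_
        have hj0 : (j : ℕ) ≠ 0 := by
          intro h
          exact (Finset.mem_erase.mp hj).1 (Fin.ext (by simpa using h))
        rw [PowerSeries.coeff_C_mul, PowerSeries.coeff_X_pow, if_neg (fun hh => hj0 hh.symm), mul_zero]
      · rw [Finset.sum_eq_single (⟨m, hm⟩ : Fin (q+1))]
        · simp [PowerSeries.coeff_C_mul, PowerSeries.coeff_X_pow]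
        · intro j hj hne
          rw [PowerSeries.coeff_C_mul, PowerSeries.coeff_X_pow, if_neg, mul_zero]
          intro hh
          exact hne (Fin.ext (by simpa using hh.symm))
        · intro hmem
          exfalso
          apply hmem
          rw [hsdef]
          exact Finset.mem_erase.mpr ⟨fun hh => h (by simpa using congrArg Fin.val hh), Finset.mem_univ _⟩
    rw [hPm]
    split_ifs with h
    · subst h
      simp [hgdef, hg0, hu]
    · have hm1 : PowerSeries.coeff m (1 : PowerSeries K) = 0 := by
        rw [PowerSeries.coeff_one, if_neg h]
      rw [hm1, zero_add]
      simp only [hgdef, PowerSeries.coeff_mk, hcdef]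
      field_simp
      ring

  -- W' := C u⁻¹ * geometric sum
  set Wp : PowerSeries K := PowerSeries.C u⁻¹ * ∑ k ∈ Finset.range (q+1), (-P)^k with hWp
  have hgeom : (1 + P) * (∑ k ∈ Finset.range (q+1), (-P)^k) = 1 - (-P)^(q+1) := by
    have h := geom_sum_mul_neg (-P) (q+1)
    rw [sub_neg_eq_add] at h
    rw [mul_comm]
    exact h
  have hgw : g * Wp = 1 + (-((-P)^(q+1)) + (g - PowerSeries.C u * (1+P)) * Wp) := by
    have hu' : PowerSeries.C u * PowerSeries.C u⁻¹ = 1 := by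
      rw [← map_mul, mul_inv_cancel₀ haq, map_one]
    calc g * Wp
        = (PowerSeries.C u * PowerSeries.C u⁻¹) *
            ((1 + P) * (∑ k ∈ Finset.range (q+1), (-P)^k))
          + (g - PowerSeries.C u * (1+P)) * Wp := by rw [hWp]; ring
      _ = 1 + (-((-P)^(q+1)) + (g - PowerSeries.C u * (1+P)) * Wp) := by
          rw [hu', hgeom]; ring
  have hr : (PowerSeries.X : PowerSeries K)^(q+1) ∣
      (-((-P)^(q+1)) + (g - PowerSeries.C u * (1+P)) * Wp) := by
    refine dvd_add (dvd_neg.mpr ?_) (ht.mul_right Wp)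
    exact pow_dvd_pow_of_dvd (dvd_neg.mpr hXP) (q+1)
  have hcoeffW : PowerSeries.coeff q g⁻¹ = PowerSeries.coeff q Wp :=
    aux_inv_coeff g Wp _ hgne q hgw hr
  -- coefficient of P^k
  have hPk : ∀ k, PowerSeries.coeff q (P^k) =
      ∑ ι ∈ Finset.piAntidiag s k,
        (if q = ∑ j ∈ s, (j:ℕ) * ι j
          then (Nat.multinomial s ι : K) * ∏ j ∈ s, c j ^ ι j else 0) := by
    intro k
    rw [hPdef, Finset.sum_pow_eq_sum_piAntidiag, map_sum]
    refine Finset.sum_congr rfl fun ι hι => ?_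
    have hprod : ∏ j ∈ s, (PowerSeries.C (c j) * PowerSeries.X ^ (j:ℕ))^(ι j)
        = PowerSeries.C (∏ j ∈ s, c j ^ ι j) *
            PowerSeries.X ^ (∑ j ∈ s, (j:ℕ) * ι j) := by
      rw [map_prod, ← Finset.prod_pow_eq_pow_sum, ← Finset.prod_mul_distrib]
      refine Finset.prod_congr rfl fun j hj => ?_
      rw [mul_pow, map_pow, pow_mul]
    have hcast : ((Nat.multinomial s ι : PowerSeries K)) =
        PowerSeries.C ((Nat.multinomial s ι : K)) := by
      rw [map_natCast]
    rw [hprod, hcast, PowerSeries.coeff_C_mul, PowerSeries.coeff_C_mul,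
      PowerSeries.coeff_X_pow, mul_ite, mul_ite, mul_one, mul_zero, mul_zero]
  -- the double sum T
  have hWpcoeff : PowerSeries.coeff q Wp =
      u⁻¹ * ∑ k ∈ Finset.range (q+1), ∑ ι ∈ Finset.piAntidiag s k,
        (if q = ∑ j ∈ s, (j:ℕ) * ι j
          then (-1:K)^k * (Nat.multinomial s ι : K) * ∏ j ∈ s, c j ^ ι j else 0) := by
    rw [hWp, PowerSeries.coeff_C_mul, map_sum]
    congr 1
    refine Finset.sum_congr rfl fun k hk => ?_
    have hnp : (-P)^k = PowerSeries.C ((-1:K)^k) * P^k := by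
      rw [neg_pow]
      congr 1
      rw [map_pow, map_neg, map_one]
    rw [hnp, PowerSeries.coeff_C_mul, hPk k, Finset.mul_sum]
    refine Finset.sum_congr rfl fun ι hι => ?_
    rw [mul_ite, mul_zero, ← mul_assoc]
  -- reorganize as a sum over a sigma type
  set Tset := (Finset.range (q+1)).sigma
      (fun k => (Finset.piAntidiag s k).filter
        (fun ι => q = ∑ j ∈ s, (j:ℕ) * ι j)) with hTset
  have hsigma : (∑ k ∈ Finset.range (q+1), ∑ ι ∈ Finset.piAntidiag s k,
        (if q = ∑ j ∈ s, (j:ℕ) * ι j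
          then (-1:K)^k * (Nat.multinomial s ι : K) * ∏ j ∈ s, c j ^ ι j else 0)) =
      ∑ p ∈ Tset, (-1:K)^p.1 * (Nat.multinomial s p.2 : K) * ∏ j ∈ s, c j ^ p.2 j := by
    rw [hTset]
    calc (∑ k ∈ Finset.range (q+1), ∑ ι ∈ Finset.piAntidiag s k,
        (if q = ∑ j ∈ s, (j:ℕ) * ι j
          then (-1:K)^k * (Nat.multinomial s ι : K) * ∏ j ∈ s, c j ^ ι j else 0))
        = ∑ k ∈ Finset.range (q+1),
            ∑ ι ∈ (Finset.piAntidiag s k).filter (fun ι => q = ∑ j ∈ s, (j:ℕ) * ι j),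
            (-1:K)^k * (Nat.multinomial s ι : K) * ∏ j ∈ s, c j ^ ι j :=
          Finset.sum_congr rfl fun k _ => (Finset.sum_filter _ _).symm
      _ = _ := Finset.sum_sigma' _ _ _
  -- the bijection
  have husum : ∀ ι : Fin (q+1) → ℕ, (∑ j : Fin (q+1), ι j) = ι 0 + ∑ j ∈ s, ι j := by
    intro ι
    rw [hsdef, Finset.add_sum_erase _ ι (Finset.mem_univ 0)]
  have hwsum : ∀ ι : Fin (q+1) → ℕ,
      (∑ j : Fin (q+1), (j:ℕ) * ι j) = ∑ j ∈ s, (j:ℕ) * ι j := by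
    intro ι
    rw [hsdef, ← Finset.add_sum_erase _ (fun j : Fin (q+1) => (j:ℕ) * ι j) (Finset.mem_univ 0)]
    simp
  have hbij : (∑ p ∈ Tset, u^q * ((-1:K)^p.1 * (Nat.multinomial s p.2 : K) * ∏ j ∈ s, c j ^ p.2 j))
      = ∑ ι ∈ Finset.filter
          (fun ι => (∑ j : Fin (q + 1), ι j) = q ∧ (∑ j : Fin (q + 1), (j : ℕ) * ι j) = q)
          (Fintype.piFinset fun _ : Fin (q + 1) => Finset.range (q + 1)),
        (-1 : K) ^ (q - ι 0) * (Nat.multinomial (Finset.univ.erase 0) ι : K) *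
          ∏ j : Fin (q + 1), a (q + (j : ℕ)) ^ ι j := by
    refine Finset.sum_nbij'
      (fun p => fun j : Fin (q+1) => if j = 0 then q - p.1 else p.2 j)
      (fun ι => ⟨q - ι 0, fun j => if j = 0 then 0 else ι j⟩)
      ?_ ?_ ?_ ?_ ?_
    · rintro ⟨k, ι⟩ hp
      simp only [hTset, Finset.mem_sigma, Finset.mem_filter, Finset.mem_piAntidiag,
        Finset.mem_range, Fintype.mem_piFinset] at hp ⊢
      obtain ⟨hk, ⟨hsum, hsupp⟩, hw⟩ := hp
      refine ⟨?_, ?_, ?_⟩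
      · intro j
        by_cases hj : j = 0
        · rw [if_pos hj]; omega
        · rw [if_neg hj]
          have hjs : j ∈ s := Finset.mem_erase.mpr ⟨hj, Finset.mem_univ _⟩
          have h5 := Finset.single_le_sum (f := ι) (fun i _ => Nat.zero_le _) hjs
          have hsum' : (∑ i ∈ s, ι i) = k := hsum
          omega
      · rw [husum]
        have e : (∑ j ∈ s, if j = 0 then q - k else ι j) = ∑ j ∈ s, ι j :=
          Finset.sum_congr rfl fun j hj => if_neg (Finset.mem_erase.mp hj).1
        rw [if_pos rfl, e]
        have : (∑ j ∈ s, ι j) = k := hsum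
        omega
      · rw [hwsum]
        have e : (∑ j ∈ s, (j:ℕ) * if j = 0 then q - k else ι j) = ∑ j ∈ s, (j:ℕ) * ι j :=
          Finset.sum_congr rfl fun j hj => by rw [if_neg (Finset.mem_erase.mp hj).1]
        rw [e, ← hw]
    · intro ι hι
      simp only [hTset, Finset.mem_sigma, Finset.mem_filter, Finset.mem_piAntidiag,
        Finset.mem_range, Fintype.mem_piFinset] at hι ⊢
      obtain ⟨hb, h1, h2⟩ := hι
      have h3 := husum ι
      refine ⟨by omega, ⟨?_, ?_⟩, ?_⟩
      · have e : (∑ j ∈ s, if j = 0 then 0 else ι j) = ∑ j ∈ s, ι j :=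
          Finset.sum_congr rfl fun j hj => if_neg (Finset.mem_erase.mp hj).1
        rw [e]
        omega
      · intro i hi
        by_cases hi0 : i = 0
        · simp [hi0] at hi
        · exact Finset.mem_erase.mpr ⟨hi0, Finset.mem_univ _⟩
      · have e : (∑ j ∈ s, (j:ℕ) * if j = 0 then 0 else ι j) = ∑ j ∈ s, (j:ℕ) * ι j :=
          Finset.sum_congr rfl fun j hj => by rw [if_neg (Finset.mem_erase.mp hj).1]
        rw [e, ← hwsum ι, h2]
    · rintro ⟨k, ι⟩ hp
      simp only [hTset, Finset.mem_sigma, Finset.mem_filter, Finset.mem_piAntidiag,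
        Finset.mem_range] at hp
      obtain ⟨hk, ⟨hsum, hsupp⟩, hw⟩ := hp
      have hι0 : ι 0 = 0 := by
        by_contra h
        have h6 := hsupp 0 h
        rw [hsdef] at h6
        exact absurd rfl (Finset.mem_erase.mp h6).1
      simp only
      refine Sigma.ext ?_ (heq_of_eq ?_)
      · simp only [eq_self_iff_true, if_true]
        have hsum' : (∑ j ∈ s, ι j) = k := hsum
        omega
      · funext j
        by_cases hj : j = 0
        · simp [hj, hι0]
        · simp only [if_neg hj]
    · intro ι hι
      simp only [Finset.mem_filter, Fintype.mem_piFinset] at hι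
      obtain ⟨hb, h1, h2⟩ := hι
      have h3 := husum ι
      funext j
      by_cases hj : j = 0
      · simp only [hj, eq_self_iff_true, if_true]
        omega
      · simp only [if_neg hj]
    · rintro ⟨k, ι⟩ hp
      simp only [hTset, Finset.mem_sigma, Finset.mem_filter, Finset.mem_piAntidiag,
        Finset.mem_range] at hp
      obtain ⟨hk, ⟨hsum, hsupp⟩, hw⟩ := hp
      have hkq : k ≤ q := by omega
      show u ^ q * ((-1:K)^k * (Nat.multinomial s ι : K) * ∏ j ∈ s, c j ^ ι j)
        = (-1:K) ^ (q - (if (0 : Fin (q+1)) = 0 then q - k else ι 0)) *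
          (Nat.multinomial (Finset.univ.erase 0)
            (fun j : Fin (q+1) => if j = 0 then q - k else ι j) : K) *
          ∏ j : Fin (q+1), a (q + (j:ℕ)) ^ (if j = 0 then q - k else ι j)
      have e1 : q - (if (0 : Fin (q+1)) = 0 then q - k else ι 0) = k := by
        rw [if_pos rfl]; omega
      have e2 : Nat.multinomial (Finset.univ.erase 0)
          (fun j : Fin (q+1) => if j = 0 then q - k else ι j) = Nat.multinomial s ι :=
        Nat.multinomial_congr fun j hj => if_neg (Finset.mem_erase.mp hj).1
      have e3 : (∏ j : Fin (q+1), a (q + (j:ℕ)) ^ (if j = 0 then q - k else ι j))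
          = u^(q-k) * ∏ j ∈ s, a (q + (j:ℕ)) ^ ι j := by
        have f2 : (∏ j ∈ Finset.univ.erase (0 : Fin (q+1)),
              a (q + (j:ℕ)) ^ (if j = 0 then q - k else ι j))
            = ∏ j ∈ s, a (q + (j:ℕ)) ^ ι j :=
          Finset.prod_congr rfl fun j hj => by rw [if_neg (Finset.mem_erase.mp hj).1]
        rw [← Finset.mul_prod_erase Finset.univ _ (Finset.mem_univ (0 : Fin (q+1))), f2]
        simp [hu]
      have e4 : (∏ j ∈ s, a (q + (j:ℕ)) ^ ι j) = u^k * ∏ j ∈ s, c j ^ ι j := by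
        have h7 : ∀ j ∈ s, a (q + (j:ℕ)) ^ ι j = u ^ ι j * c j ^ ι j := by
          intro j hj
          rw [← mul_pow, hcdef]
          simp only
          rw [mul_comm, div_mul_cancel₀ _ haq]
        rw [Finset.prod_congr rfl h7, Finset.prod_mul_distrib, Finset.prod_pow_eq_pow_sum]
        have : (∑ j ∈ s, ι j) = k := hsum
        rw [this]
      rw [e1, e2, e3, e4]
      have e5 : u^(q-k) * u^k = u^q := by
        rw [← pow_add]
        congr 1
        omega
      calc u ^ q * ((-1:K)^k * (Nat.multinomial s ι : K) * ∏ j ∈ s, c j ^ ι j)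
          = (u^(q-k) * u^k) * ((-1:K)^k * (Nat.multinomial s ι : K) * ∏ j ∈ s, c j ^ ι j) := by
            rw [e5]
        _ = (-1:K)^k * (Nat.multinomial s ι : K) *
              (u^(q-k) * (u^k * ∏ j ∈ s, c j ^ ι j)) := by ring
  -- final assembly
  rw [hA, hcoeffW, hWpcoeff, hsigma, ← hbij, ← Finset.mul_sum]
  field_simp
  ring
end

section
/- Let K be a field and φ a formal power series over K with φ(0) = 0 and φ'(0) ≠ 0. Then for every integer N ≥ 1, the coefficient of 1/z in the formal Laurent series expansion about 0 of φ'(z)/φ(z)^{N+1} is zero. -/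
open PowerSeries in
lemma key_charzero {S : Type*} [CommRing S] [IsDomain S] [CharZero S]
    (G : PowerSeries S) (M : ℕ) :
    coeff (M + 1) (G ^ (M + 1)) = coeff M (G.derivativeFun * G ^ M) := by
  have hD : d⁄dX S (G ^ (M + 1)) = (M + 1) • G ^ M • d⁄dX S G := by
    have := Derivation.leibniz_pow (d⁄dX S) G (M + 1)
    simpa using this
  have hdf : d⁄dX S G = G.derivativeFun := rfl
  have h1 : coeff M (d⁄dX S (G ^ (M + 1)))
      = coeff (M + 1) (G ^ (M + 1)) * (M + 1) := coeff_derivative _ _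
  rw [hD] at h1
  have h2 : coeff M ((M + 1) • G ^ M • d⁄dX S G)
      = ((M + 1 : ℕ) : S) * coeff M (G.derivativeFun * G ^ M) := by
    rw [map_nsmul, nsmul_eq_mul, smul_eq_mul, hdf, mul_comm (G ^ M)]
  rw [h2] at h1
  have hne : ((M + 1 : ℕ) : S) ≠ 0 := Nat.cast_ne_zero.mpr (Nat.succ_ne_zero M)
  apply mul_left_cancel₀ hne
  push_cast at h1 ⊢
  linear_combination -h1

open PowerSeries in
lemma key {R : Type*} [CommRing R] (g : PowerSeries R) (M : ℕ) :
    coeff (M + 1) (g ^ (M + 1)) = coeff M (g.derivativeFun * g ^ M) := by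
  set S := MvPolynomial ℕ ℤ
  set G : PowerSeries S := PowerSeries.mk fun n => MvPolynomial.X n with hG
  set σ : S →+* R := MvPolynomial.eval₂Hom (Int.castRingHom R) fun n => coeff n g with hσ
  have hmap : PowerSeries.map σ G = g := by
    ext n
    rw [PowerSeries.coeff_map, hG, PowerSeries.coeff_mk, hσ]
    exact MvPolynomial.eval₂Hom_X' _ _ _
  have hder : (PowerSeries.map σ G).derivativeFun = PowerSeries.map σ G.derivativeFun := by
    ext n
    change coeff n (d⁄dX R _) = σ (coeff n (d⁄dX S _))
    rw [coeff_derivative, coeff_derivative]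
    simp [PowerSeries.coeff_map, coeff_derivativeFun]
  have h := congrArg σ (key_charzero G M)
  rw [← hmap, hder, ← map_pow, ← map_pow, ← map_mul]
  simpa only [PowerSeries.coeff_map] using h

open PowerSeries HahnSeries in
theorem stmt2 {K : Type*} [Field K] (φ : PowerSeries K)
    (h0 : PowerSeries.constantCoeff φ = 0) (h1 : PowerSeries.coeff 1 φ ≠ 0)
    (N : ℕ) (hN : 1 ≤ N) :
    (((HahnSeries.ofPowerSeries ℤ K) φ.derivativeFun : LaurentSeries K) *
      (((HahnSeries.ofPowerSeries ℤ K) φ : LaurentSeries K) ^ (N + 1))⁻¹).coeff (-1)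
      = 0 := by
  obtain ⟨M, rfl⟩ : ∃ M, N = M + 1 := ⟨N - 1, (Nat.succ_pred_eq_of_pos hN).symm⟩
  set u : PowerSeries K := PowerSeries.mk fun n => coeff (n + 1) φ with hu
  have hXu : PowerSeries.X * u = φ := by
    ext n
    cases n with
    | zero => simp [h0]
    | succ n => simp [hu, PowerSeries.coeff_succ_X_mul]
  have hu0 : constantCoeff u ≠ 0 := by
    simpa [hu, ← PowerSeries.coeff_zero_eq_constantCoeff] using h1
  set g : PowerSeries K := u⁻¹ with hg
  have hug : u * g = 1 := PowerSeries.mul_inv_cancel u hu0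
  -- the inverse of (ofPowerSeries φ)^(M+2)
  have hinv : ((((HahnSeries.ofPowerSeries ℤ K) φ : LaurentSeries K)) ^ (M + 1 + 1))⁻¹
      = HahnSeries.single (-(M + 1 + 1 : ℕ) : ℤ) (1 : K) *
        (HahnSeries.ofPowerSeries ℤ K (g ^ (M + 1 + 1))) := by
    refine (eq_inv_of_mul_eq_one_left ?_).symm
    rw [← map_pow, ← hXu, mul_pow, map_mul, ofPowerSeries_X_pow]
    calc HahnSeries.single (-(M + 1 + 1 : ℕ) : ℤ) (1 : K) *
          (HahnSeries.ofPowerSeries ℤ K (g ^ (M + 1 + 1))) *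
          ((HahnSeries.single ((M + 1 + 1 : ℕ) : ℤ) (1 : K)) *
            HahnSeries.ofPowerSeries ℤ K (u ^ (M + 1 + 1)))
        = (HahnSeries.single (-(M + 1 + 1 : ℕ) : ℤ) (1 : K) *
            HahnSeries.single ((M + 1 + 1 : ℕ) : ℤ) (1 : K)) *
          (HahnSeries.ofPowerSeries ℤ K ((u * g) ^ (M + 1 + 1))) := by
          rw [mul_pow, map_mul]; ring
      _ = 1 := by
          rw [HahnSeries.single_mul_single, hug, one_pow, map_one, neg_add_cancel]
          simp
  rw [hinv, show ((HahnSeries.ofPowerSeries ℤ K) φ.derivativeFun : LaurentSeries K) *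
        (HahnSeries.single (-(M + 1 + 1 : ℕ) : ℤ) (1 : K) *
          (HahnSeries.ofPowerSeries ℤ K (g ^ (M + 1 + 1))))
      = HahnSeries.single (-(M + 1 + 1 : ℕ) : ℤ) (1 : K) *
          (HahnSeries.ofPowerSeries ℤ K (φ.derivativeFun * g ^ (M + 1 + 1))) by
        rw [map_mul]; ring]
  have hcoe : (-1 : ℤ) = ((M + 1 : ℕ) : ℤ) + (-(M + 1 + 1 : ℕ) : ℤ) := by push_cast; ring
  rw [hcoe, HahnSeries.coeff_single_mul_add, one_mul, ofPowerSeries_apply_coeff]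
  -- now a power series statement
  have hgd : u.derivativeFun * g ^ 2 = -g.derivativeFun := by
    have h := derivative_inv' u
    have hdd : ∀ f : PowerSeries K, d⁄dX K f = f.derivativeFun := fun _ => rfl
    rw [hdd, hdd, ← hg] at h
    rw [h]; ring
  have hphid : φ.derivativeFun = u + PowerSeries.X * u.derivativeFun := by
    rw [← hXu, derivativeFun_mul]
    have hdX : (PowerSeries.X : PowerSeries K).derivativeFun = 1 := derivative_X
    rw [hdX, smul_eq_mul, smul_eq_mul, mul_one]
    ring
  have hsplit : φ.derivativeFun * g ^ (M + 1 + 1)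
      = g ^ (M + 1) - PowerSeries.X * (g.derivativeFun * g ^ M) := by
    rw [hphid]
    calc (u + PowerSeries.X * u.derivativeFun) * g ^ (M + 1 + 1)
        = (u * g) * g ^ (M + 1) + PowerSeries.X * (u.derivativeFun * g ^ 2) * g ^ M := by ring
      _ = g ^ (M + 1) - PowerSeries.X * (g.derivativeFun * g ^ M) := by
          rw [hug, hgd]; ring
  rw [hsplit, map_sub, PowerSeries.coeff_succ_X_mul, key g M, sub_self]
end

section
/- Let K be a field and f a formal power series over K with f(0) = 0 and f(z) ≠ z. For every formal power series φ over K with φ(0) = 0 and φ'(0) ≠ 0, the conjugate power series f̂ = φ ∘ f ∘ φ^{-1} satisfies ind(f̂) = ind(f). That is, the residue fixed point index is invariant under formal coordinate changes. -/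
open PowerSeries Finset

section CommRingPart

variable {R : Type*} [CommRing R]

theorem coeff_pcomp (f g : PowerSeries R) (n : ℕ) :
    coeff n (pcomp f g) = ∑ k ∈ range (n + 1), coeff k f * coeff n (g ^ k) := by
  simp [pcomp, coeff_mk]

theorem coeff_pow_eq_zero' {g : PowerSeries R} (hg : constantCoeff g = 0)
    {n k : ℕ} (h : n < k) : coeff n (g ^ k) = 0 := by
  obtain ⟨c, hc⟩ := pow_dvd_pow_of_dvd (X_dvd_iff.2 hg) (n := k)
  rw [hc, coeff_X_pow_mul', if_neg (Nat.not_le.2 h)]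

theorem coeff_pcomp_eq_aeval {f g : R⟦X⟧} (hg : constantCoeff g = 0) {n N : ℕ} (hN : n < N) :
    coeff n (pcomp f g) = coeff n (Polynomial.aeval g (trunc N f)) := by
  have hdeg : (trunc N f).natDegree < N := by
    obtain ⟨M, rfl⟩ := Nat.exists_eq_add_of_lt hN
    simpa using natDegree_trunc_lt f (n + M)
  rw [Polynomial.aeval_eq_sum_range' hdeg, map_sum, coeff_pcomp]
  have : ∀ i ∈ range N, coeff n ((trunc N f).coeff i • g ^ i)
      = coeff i f * coeff n (g ^ i) := by
    intro i hi
    rw [coeff_smul, coeff_trunc, if_pos (mem_range.1 hi), smul_eq_mul]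
  rw [Finset.sum_congr rfl this]
  apply Finset.sum_subset
  · exact range_subset_range.2 hN
  · intro k _ hk
    rw [coeff_pow_eq_zero' hg (by simpa using hk), mul_zero]

theorem X_pow_dvd_pcomp_sub_aeval {f g : R⟦X⟧} (hg : constantCoeff g = 0) (N : ℕ) :
    (X : R⟦X⟧) ^ N ∣ pcomp f g - Polynomial.aeval g (trunc N f) := by
  rw [X_pow_dvd_iff]
  intro m hm
  rw [map_sub, coeff_pcomp_eq_aeval hg hm, sub_self]

theorem coeff_eq_of_X_pow_dvd {A B : R⟦X⟧} {n N : ℕ} (h : (X : R⟦X⟧) ^ N ∣ A - B)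
    (hn : n < N) : coeff n A = coeff n B := by
  have := (X_pow_dvd_iff.1 h) n hn
  rw [map_sub, sub_eq_zero] at this
  exact this

theorem pcomp_add (f₁ f₂ g : R⟦X⟧) : pcomp (f₁ + f₂) g = pcomp f₁ g + pcomp f₂ g := by
  ext n
  simp [coeff_pcomp, add_mul, Finset.sum_add_distrib]

theorem pcomp_sub (f₁ f₂ g : R⟦X⟧) : pcomp (f₁ - f₂) g = pcomp f₁ g - pcomp f₂ g := by
  ext n
  simp [coeff_pcomp, sub_mul, Finset.sum_sub_distrib]

theorem pcomp_zero (g : R⟦X⟧) : pcomp 0 g = 0 := by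
  ext n
  simp [coeff_pcomp]

theorem pcomp_sum {ι : Type*} (s : Finset ι) (F : ι → R⟦X⟧) (g : R⟦X⟧) :
    pcomp (∑ i ∈ s, F i) g = ∑ i ∈ s, pcomp (F i) g := by
  classical
  induction s using Finset.induction with
  | empty => simp [pcomp_zero]
  | insert a s2 hx ih => rw [Finset.sum_insert hx, Finset.sum_insert hx, pcomp_add, ih]

theorem pcomp_one (g : R⟦X⟧) : pcomp 1 g = 1 := by
  ext n
  rw [coeff_pcomp]
  rcases Nat.eq_zero_or_pos n with rfl | hn
  · simp
  · rw [Finset.sum_eq_zero, coeff_one, if_neg hn.ne']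
    intro k hk
    rcases Nat.eq_zero_or_pos k with rfl | hk'
    · simp [coeff_one, hn.ne']
    · rw [coeff_one, if_neg hk'.ne', zero_mul]

theorem constantCoeff_pcomp (f g : R⟦X⟧) :
    constantCoeff (pcomp f g) = constantCoeff f := by
  have := coeff_pcomp f g 0
  simpa [coeff_zero_eq_constantCoeff] using this

theorem pcomp_X {g : R⟦X⟧} (hg : constantCoeff g = 0) : pcomp X g = g := by
  ext n
  rw [coeff_pcomp]
  rcases Nat.eq_zero_or_pos n with rfl | hn
  · simp [hg]
  · rw [Finset.sum_eq_single 1]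
    · simp
    · intro k hk hk1
      rcases Nat.eq_zero_or_pos k with rfl | hk'
      · simp
      · rw [coeff_X, if_neg hk1, zero_mul]
    · intro h
      exact absurd (Finset.mem_range.2 (by omega)) h

theorem pcomp_mul {g : R⟦X⟧} (hg : constantCoeff g = 0) (f₁ f₂ : R⟦X⟧) :
    pcomp (f₁ * f₂) g = pcomp f₁ g * pcomp f₂ g := by
  ext n
  have h1 := X_pow_dvd_pcomp_sub_aeval (f := f₁) hg (n + 1)
  have h2 := X_pow_dvd_pcomp_sub_aeval (f := f₂) hg (n + 1)
  have h3 := X_pow_dvd_pcomp_sub_aeval (f := f₁ * f₂) hg (n + 1)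
  set a := Polynomial.aeval g (trunc (n+1) f₁)
  set b := Polynomial.aeval g (trunc (n+1) f₂)
  have key : (X : R⟦X⟧) ^ (n+1) ∣ pcomp f₁ g * pcomp f₂ g - a * b := by
    have : pcomp f₁ g * pcomp f₂ g - a * b
        = (pcomp f₁ g - a) * pcomp f₂ g + a * (pcomp f₂ g - b) := by ring
    rw [this]
    exact dvd_add (Dvd.dvd.mul_right h1 _) (Dvd.dvd.mul_left h2 _)
  have key2 : (X : R⟦X⟧) ^ (n+1) ∣ Polynomial.aeval g (trunc (n+1) (f₁ * f₂)) - a * b := by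
    have hab : a * b = Polynomial.aeval g (trunc (n+1) f₁ * trunc (n+1) f₂) := by
      rw [map_mul]
    rw [hab, ← map_sub]
    have hdvd : (Polynomial.X (R := R)) ^ (n+1) ∣
        trunc (n+1) (f₁ * f₂) - trunc (n+1) f₁ * trunc (n+1) f₂ := by
      rw [Polynomial.X_pow_dvd_iff]
      intro d hd
      have := trunc_trunc_mul_trunc (n := n+1) f₁ f₂
      have hc : (trunc (n+1) (trunc (n+1) f₁ * trunc (n+1) f₂ : R⟦X⟧)).coeff d
          = (trunc (n+1) (f₁ * f₂)).coeff d := by rw [this]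
      rw [coeff_trunc, coeff_trunc, if_pos hd, if_pos hd] at hc
      rw [Polynomial.coeff_sub, sub_eq_zero, coeff_trunc, if_pos hd, ← hc,
        ← Polynomial.coeff_coe, Polynomial.coe_mul]
    obtain ⟨r, hr⟩ := hdvd
    rw [hr, map_mul, map_pow, Polynomial.aeval_X]
    exact Dvd.dvd.mul_right (pow_dvd_pow_of_dvd (X_dvd_iff.2 hg) _) _
  rw [coeff_eq_of_X_pow_dvd h3 n.lt_succ_self, coeff_eq_of_X_pow_dvd key n.lt_succ_self,
    coeff_eq_of_X_pow_dvd key2 n.lt_succ_self]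

theorem pcomp_pow {g : R⟦X⟧} (hg : constantCoeff g = 0) (f : R⟦X⟧) (k : ℕ) :
    pcomp (f ^ k) g = pcomp f g ^ k := by
  induction k with
  | zero => simpa using pcomp_one g
  | succ k ih => rw [pow_succ, pow_succ, pcomp_mul hg, ih]

theorem pcomp_C (r : R) (g : R⟦X⟧) : pcomp (C r) g = C r := by
  ext n
  rw [coeff_pcomp]
  rcases Nat.eq_zero_or_pos n with rfl | hn
  · simp
  · rw [Finset.sum_eq_zero, coeff_C, if_neg hn.ne']
    intro k hk
    rcases Nat.eq_zero_or_pos k with rfl | hk'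
    · simp [coeff_one, hn.ne']
    · rw [coeff_C, if_neg hk'.ne', zero_mul]

theorem derivative_pcomp {g : R⟦X⟧} (hg : constantCoeff g = 0) (f : R⟦X⟧) :
    derivative R (pcomp f g) = pcomp (derivative R f) g * derivative R g := by
  ext n
  have h1 : coeff n (derivative R (pcomp f g))
      = coeff n (derivative R (Polynomial.aeval g (trunc (n+2) f))) := by
    rw [coeff_derivative, coeff_derivative, coeff_pcomp_eq_aeval hg (N := n+2) (by omega)]
  have h2 : derivative R (Polynomial.aeval g (trunc (n+2) f))
      = Polynomial.aeval g (Polynomial.derivative (trunc (n+2) f)) * derivative R g := by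
    rw [Derivation.map_aeval, smul_eq_mul]
  have h3 : Polynomial.derivative (trunc (n+2) f) = trunc (n+1) (derivative R f) :=
    (trunc_derivative f (n+1)).symm
  have h4 : (X : R⟦X⟧) ^ (n+1) ∣ pcomp (derivative R f) g * derivative R g
      - Polynomial.aeval g (trunc (n+1) (derivative R f)) * derivative R g := by
    rw [← sub_mul]
    exact (X_pow_dvd_pcomp_sub_aeval hg (n+1)).mul_right _
  rw [h1, h2, h3]
  exact (coeff_eq_of_X_pow_dvd h4 n.lt_succ_self).symm

/-! ### The geometric-sum decompositions -/

noncomputable def Sgeom (f : R⟦X⟧) (k : ℕ) : R⟦X⟧ := ∑ i ∈ range k, X ^ i * f ^ (k - 1 - i)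

theorem Sgeom_mul (f : R⟦X⟧) (k : ℕ) :
    (X - f) * Sgeom f k = X ^ k - f ^ k := by
  rw [mul_comm, Sgeom, geom_sum₂_mul]

theorem coeff_Sgeom_eq_zero {f : R⟦X⟧} (hf : constantCoeff f = 0)
    {n k : ℕ} (h : n + 1 < k) : coeff n (Sgeom f k) = 0 := by
  rw [Sgeom, map_sum]
  apply Finset.sum_eq_zero
  intro i hi
  rw [coeff_X_pow_mul']
  split_ifs with hin
  · exact coeff_pow_eq_zero' hf (by omega)
  · rfl

noncomputable def Tgeom (f : R⟦X⟧) (k : ℕ) : R⟦X⟧ :=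
  ∑ i ∈ range k, X ^ i * Sgeom f (k - 1 - i)

theorem coeff_Tgeom_eq_zero {f : R⟦X⟧} (hf : constantCoeff f = 0)
    {n k : ℕ} (h : n + 2 < k) : coeff n (Tgeom f k) = 0 := by
  rw [Tgeom, map_sum]
  apply Finset.sum_eq_zero
  intro i hi
  rw [coeff_X_pow_mul']
  split_ifs with hin
  · exact coeff_Sgeom_eq_zero hf (by simp only [mem_range] at hi; omega)
  · rfl

theorem Tgeom_mul (f : R⟦X⟧) (k : ℕ) :
    (X - f) * Tgeom f k = k • (X : R⟦X⟧) ^ (k - 1) - Sgeom f k := by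
  rw [Tgeom, mul_sum]
  have : ∀ i ∈ range k, (X - f) * (X ^ i * Sgeom f (k - 1 - i))
      = X ^ i * X ^ (k - 1 - i) - X ^ i * f ^ (k - 1 - i) := by
    intro i hi
    rw [mul_left_comm, Sgeom_mul, mul_sub]
  rw [Finset.sum_congr rfl this, Finset.sum_sub_distrib, Sgeom]
  congr 1
  have : ∀ i ∈ range k, (X : R⟦X⟧) ^ i * X ^ (k - 1 - i) = X ^ (k - 1) := by
    intro i hi
    rw [← pow_add]
    congr 1
    simp only [mem_range] at hi
    omega
  rw [Finset.sum_congr rfl this, Finset.sum_const, card_range]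

noncomputable def Efun (φ f : R⟦X⟧) : R⟦X⟧ :=
  PowerSeries.mk fun n => ∑ k ∈ range (n + 2), coeff k φ * coeff n (Sgeom f k)

noncomputable def Gfun (φ f : R⟦X⟧) : R⟦X⟧ :=
  PowerSeries.mk fun n => ∑ k ∈ range (n + 3), coeff k φ * coeff n (Tgeom f k)

theorem coeff_Efun_eq {φ f : R⟦X⟧} (hf : constantCoeff f = 0) {b N : ℕ} (hb : b + 2 ≤ N) :
    coeff b (Efun φ f) = ∑ k ∈ range N, coeff k φ * coeff b (Sgeom f k) := by
  rw [Efun, coeff_mk]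
  apply Finset.sum_subset (by intro x hx; simp only [mem_range] at *; omega)
  intro k hk hk2
  simp only [mem_range] at hk hk2
  rw [coeff_Sgeom_eq_zero hf (by omega), mul_zero]

theorem coeff_Gfun_eq {φ f : R⟦X⟧} (hf : constantCoeff f = 0) {b N : ℕ} (hb : b + 3 ≤ N) :
    coeff b (Gfun φ f) = ∑ k ∈ range N, coeff k φ * coeff b (Tgeom f k) := by
  rw [Gfun, coeff_mk]
  apply Finset.sum_subset (by intro x hx; simp only [mem_range] at *; omega)
  intro k hk hk2
  simp only [mem_range] at hk hk2
  rw [coeff_Tgeom_eq_zero hf (by omega), mul_zero]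

theorem coeff_mul_swap {A : R⟦X⟧} {c : ℕ → R} {s : ℕ → R⟦X⟧} {E : R⟦X⟧} {n N : ℕ}
    (hE : ∀ b ≤ n, coeff b E = ∑ k ∈ range N, c k * coeff b (s k)) :
    coeff n (A * E) = ∑ k ∈ range N, c k * coeff n (A * s k) := by
  rw [coeff_mul]
  have : ∀ p ∈ antidiagonal n, coeff p.1 A * coeff p.2 E
      = ∑ k ∈ range N, c k * (coeff p.1 A * coeff p.2 (s k)) := by
    intro p hp
    rw [hE p.2 (by have := mem_antidiagonal.1 hp; omega)]
    rw [Finset.mul_sum]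
    apply Finset.sum_congr rfl
    intro k _
    ring
  rw [Finset.sum_congr rfl this, Finset.sum_comm]
  apply Finset.sum_congr rfl
  intro k _
  rw [coeff_mul, Finset.mul_sum]

theorem Efun_spec {φ f : R⟦X⟧} (hf : constantCoeff f = 0) :
    (X - f) * Efun φ f = φ - pcomp φ f := by
  ext n
  rw [coeff_mul_swap (c := fun k => coeff k φ) (s := fun k => Sgeom f k) (N := n + 2)
    (fun b hb => coeff_Efun_eq hf (by omega))]
  have : ∀ k ∈ range (n+2), coeff k φ * coeff n ((X - f) * Sgeom f k)
      = coeff k φ * (coeff n (X ^ k) - coeff n (f ^ k)) := by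
    intro k _
    rw [Sgeom_mul, map_sub]
  rw [Finset.sum_congr rfl this]
  have expand : ∑ k ∈ range (n+2), coeff k φ * (coeff n (X ^ k) - coeff n (f ^ k))
      = (∑ k ∈ range (n+2), coeff k φ * coeff n (X ^ k))
        - ∑ k ∈ range (n+2), coeff k φ * coeff n (f ^ k) := by
    rw [← Finset.sum_sub_distrib]
    apply Finset.sum_congr rfl
    intro k _
    ring
  rw [expand, map_sub]
  congr 1
  · rw [Finset.sum_eq_single n]
    · rw [coeff_X_pow, if_pos rfl, mul_one]
    · intro k _ hk
      rw [coeff_X_pow, if_neg (fun h => hk h.symm), mul_zero]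
    · intro h
      exact absurd (mem_range.2 (by omega)) h
  · rw [coeff_pcomp]
    symm
    apply Finset.sum_subset (by intro x hx; simp only [mem_range] at *; omega)
    intro k hk hk2
    simp only [mem_range] at hk hk2
    rw [coeff_pow_eq_zero' hf (by omega), mul_zero]

theorem Gfun_spec {φ f : R⟦X⟧} (hf : constantCoeff f = 0) :
    (X - f) * Gfun φ f = derivative R φ - Efun φ f := by
  ext n
  rw [coeff_mul_swap (c := fun k => coeff k φ) (s := fun k => Tgeom f k) (N := n + 3)
    (fun b hb => coeff_Gfun_eq hf (by omega))]
  have : ∀ k ∈ range (n+3), coeff k φ * coeff n ((X - f) * Tgeom f k)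
      = coeff k φ * (coeff n (k • (X : R⟦X⟧) ^ (k-1)) - coeff n (Sgeom f k)) := by
    intro k _
    rw [Tgeom_mul, map_sub]
  rw [Finset.sum_congr rfl this]
  have expand : ∑ k ∈ range (n+3), coeff k φ * (coeff n (k • (X:R⟦X⟧) ^ (k-1)) - coeff n (Sgeom f k))
      = (∑ k ∈ range (n+3), coeff k φ * coeff n (k • (X:R⟦X⟧) ^ (k-1)))
        - ∑ k ∈ range (n+3), coeff k φ * coeff n (Sgeom f k) := by
    rw [← Finset.sum_sub_distrib]
    apply Finset.sum_congr rfl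
    intro k _
    ring
  rw [expand, map_sub]
  congr 1
  · rw [Finset.sum_eq_single (n+1)]
    · rw [coeff_derivative, map_nsmul, coeff_X_pow]
      simp only [Nat.add_sub_cancel, if_pos rfl, nsmul_eq_mul, Nat.cast_add, Nat.cast_one,
        mul_one, if_true]
    · intro k _ hk
      rw [map_nsmul, coeff_X_pow, nsmul_eq_mul]
      rcases Nat.eq_zero_or_pos k with rfl | hk'
      · simp
      · rw [if_neg (by omega), mul_zero, mul_zero]
    · intro h
      exact absurd (mem_range.2 (by omega)) h
  · exact (coeff_Efun_eq hf (by omega)).symm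

theorem constantCoeff_Efun {φ f : R⟦X⟧} (hf : constantCoeff f = 0) :
    constantCoeff (Efun φ f) = coeff 1 φ := by
  have h := coeff_Efun_eq (φ := φ) hf (b := 0) (N := 2) le_rfl
  rw [← coeff_zero_eq_constantCoeff, h]
  rw [Finset.sum_range_succ, Finset.sum_range_one]
  have h0 : Sgeom f 0 = 0 := by simp [Sgeom]
  have h1 : Sgeom f 1 = 1 := by simp [Sgeom]
  rw [h0, h1, map_zero, mul_zero, zero_add]
  simp [coeff_one]

/-! ### The universal identity `coeff (n+1) (V^(n+1)) = coeff n (V^n * V')` -/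

theorem derivative_map' {S : Type*} [CommRing S] (g : R →+* S) (f : R⟦X⟧) :
    derivative S (PowerSeries.map g f) = PowerSeries.map g (derivative R f) := by
  ext m
  rw [coeff_derivative, coeff_map, coeff_map, coeff_derivative, map_mul]
  congr 1
  rw [map_add, map_natCast, map_one]

theorem star_charZero {S : Type*} [CommRing S] [IsDomain S] [CharZero S] (V : S⟦X⟧) (n : ℕ) :
    coeff (n+1) (V ^ (n+1)) = coeff n (V ^ n * derivative S V) := by
  have hD := Derivation.leibniz_pow (derivative S) (a := V) (n+1)
  simp only [Nat.add_sub_cancel, smul_eq_mul] at hD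
  have h1 := congrArg (coeff n) hD
  rw [coeff_derivative, map_nsmul, nsmul_eq_mul] at h1
  have hne' : ((n : S) + 1) ≠ 0 := by
    exact_mod_cast (Nat.cast_ne_zero (R := S)).2 (Nat.succ_ne_zero n)
  apply mul_left_cancel₀ hne'
  push_cast at h1 ⊢
  rw [mul_comm ((n:S)+1), h1, mul_comm]

theorem star (V : R⟦X⟧) (n : ℕ) :
    coeff (n+1) (V ^ (n+1)) = coeff n (V ^ n * derivative R V) := by
  classical
  set R₀ := MvPolynomial ℕ ℤ with hR₀
  set V₀ : PowerSeries R₀ := PowerSeries.mk fun i => if i < n + 2 then MvPolynomial.X i else 0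
    with hV₀
  have h₀ : coeff (n+1) (V₀ ^ (n+1)) = coeff n (V₀ ^ n * derivative R₀ V₀) :=
    star_charZero V₀ n
  set g : R₀ →+* R := (MvPolynomial.aeval (R := ℤ) fun i => coeff i V).toRingHom with hg
  set W := PowerSeries.map g V₀ with hW
  have starW : coeff (n+1) (W ^ (n+1)) = coeff n (W ^ n * derivative R W) := by
    have h2 : coeff (n+1) (PowerSeries.map g (V₀ ^ (n+1)))
        = coeff n (PowerSeries.map g (V₀ ^ n * derivative R₀ V₀)) := by
      rw [coeff_map, coeff_map, h₀]
    rw [map_pow (PowerSeries.map g) V₀ (n+1), map_mul, map_pow (PowerSeries.map g) V₀ n,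
      ← derivative_map'] at h2
    exact h2
  have hdvd : (X : R⟦X⟧) ^ (n+2) ∣ V - W := by
    rw [X_pow_dvd_iff]
    intro m hm
    rw [map_sub, sub_eq_zero, hW, coeff_map, hV₀, coeff_mk, if_pos hm, hg]
    exact (MvPolynomial.aeval_X (R := ℤ) (S₁ := R) (fun i => coeff i V) m).symm
  have e1 : coeff (n+1) (V ^ (n+1)) = coeff (n+1) (W ^ (n+1)) :=
    coeff_eq_of_X_pow_dvd (dvd_trans hdvd (sub_dvd_pow_sub_pow V W (n+1))) (by omega)
  have hderiv : (X : R⟦X⟧) ^ (n+1) ∣ derivative R V - derivative R W := by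
    obtain ⟨c, hc⟩ := hdvd
    rw [← map_sub, hc, X_pow_dvd_iff]
    intro m hm
    rw [coeff_derivative, coeff_X_pow_mul', if_neg (by omega), zero_mul]
  have e2 : coeff n (V ^ n * derivative R V) = coeff n (W ^ n * derivative R W) := by
    apply coeff_eq_of_X_pow_dvd (N := n+1) _ (by omega)
    have hsplit : V ^ n * derivative R V - W ^ n * derivative R W
        = V ^ n * (derivative R V - derivative R W) + (V ^ n - W ^ n) * derivative R W := by
      ring
    rw [hsplit]
    apply dvd_add
    · exact Dvd.dvd.mul_left hderiv _
    · apply Dvd.dvd.mul_right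
      exact dvd_trans (pow_dvd_pow _ (by omega)) (dvd_trans hdvd (sub_dvd_pow_sub_pow V W n))
  rw [e1, e2, starW]

end CommRingPart

/-! ### Laurent series residue computations -/

section FieldPart

open HahnSeries

variable {K : Type*} [Field K]

theorem res_ofPowerSeries (P : K⟦X⟧) : (ofPowerSeries ℤ K P).coeff (-1) = 0 := by
  have := PowerSeries.coeff_coe (f := P) (-1)
  simpa using this

theorem res_single_neg_mul {m : ℕ} (hm : 1 ≤ m) (P : K⟦X⟧) :
    ((single (-(m:ℤ)) (1:K)) * ofPowerSeries ℤ K P).coeff (-1)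
      = PowerSeries.coeff (m-1) P := by
  have h : (-1 : ℤ) = ((m - 1 : ℕ) : ℤ) + (-(m:ℤ)) := by
    have : ((m - 1 : ℕ) : ℤ) = (m : ℤ) - 1 := by
      push_cast [hm]; ring
    omega
  rw [h, coeff_single_mul_add, one_mul, ofPowerSeries_apply_coeff]

theorem ofPowerSeries_inv {A : K⟦X⟧} (hA : PowerSeries.constantCoeff A ≠ 0) :
    (ofPowerSeries ℤ K A)⁻¹ = ofPowerSeries ℤ K A⁻¹ := by
  have h : ofPowerSeries ℤ K A * ofPowerSeries ℤ K A⁻¹ = 1 := by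
    rw [← map_mul, PowerSeries.mul_inv_cancel A hA, map_one]
  exact (eq_inv_of_mul_eq_one_right h).symm

theorem ofPowerSeries_ne_zero {A : K⟦X⟧} (hA : A ≠ 0) : ofPowerSeries ℤ K A ≠ 0 := by
  intro h
  apply hA
  apply HahnSeries.ofPowerSeries_injective (Γ := ℤ)
  rw [h, map_zero]

theorem res_psi_pow {ψ : K⟦X⟧} (hψ0 : PowerSeries.constantCoeff ψ = 0)
    (hψ1 : PowerSeries.coeff 1 ψ ≠ 0) {k : ℕ} (hk : 1 ≤ k) :
    ((((ofPowerSeries ℤ K) ψ) ^ k)⁻¹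
        * ofPowerSeries ℤ K (PowerSeries.derivative K ψ)).coeff (-1)
      = if k = 1 then 1 else 0 := by
  obtain ⟨v, hv⟩ : (X : K⟦X⟧) ∣ ψ := PowerSeries.X_dvd_iff.2 hψ0
  have hv0 : PowerSeries.constantCoeff v ≠ 0 := by
    intro h
    apply hψ1
    rw [hv]
    rw [show (1:ℕ) = 0 + 1 by rfl, PowerSeries.coeff_succ_X_mul,
      PowerSeries.coeff_zero_eq_constantCoeff, h]
  have hderiv : PowerSeries.derivative K ψ = v + X * PowerSeries.derivative K v := by
    rw [hv, Derivation.leibniz, smul_eq_mul, smul_eq_mul, PowerSeries.derivative_X, mul_one]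
    ring
  have h1 : (ofPowerSeries ℤ K ψ) ^ k
      = single (k : ℤ) 1 * ofPowerSeries ℤ K (v ^ k) := by
    rw [hv, map_mul, ofPowerSeries_X, mul_pow, map_pow, RatFunc.single_one_eq_pow]
  have hvk0 : PowerSeries.constantCoeff (v ^ k) ≠ 0 := by
    rw [map_pow]
    exact pow_ne_zero _ hv0
  have hvik : (v ^ k)⁻¹ = (v⁻¹) ^ k := by
    have h2 : (v⁻¹) ^ k * v ^ k = 1 := by
      rw [← mul_pow, PowerSeries.inv_mul_cancel v hv0, one_pow]
    exact ((PowerSeries.eq_inv_iff_mul_eq_one hvk0).2 h2).symm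
  have hinv : ((ofPowerSeries ℤ K ψ) ^ k)⁻¹
      = single (-(k:ℤ)) 1 * ofPowerSeries ℤ K ((v⁻¹) ^ k) := by
    rw [h1, mul_inv, HahnSeries.inv_single (k : ℤ) (1:K), inv_one,
      ofPowerSeries_inv hvk0, hvik]
  rw [hinv, mul_assoc, ← map_mul, res_single_neg_mul hk]
  rw [hderiv]
  have expand : (v⁻¹) ^ k * (v + X * PowerSeries.derivative K v)
      = (v⁻¹) ^ (k - 1) + X * ((v⁻¹) ^ k * PowerSeries.derivative K v) := by
    have hsucc : (v⁻¹) ^ k = (v⁻¹) ^ (k - 1) * v⁻¹ := by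
      conv_lhs => rw [show k = (k - 1) + 1 by omega]
      rw [pow_succ]
    rw [mul_add, hsucc, mul_assoc, PowerSeries.inv_mul_cancel v hv0, mul_one]
    ring
  rw [expand, map_add]
  rcases Nat.lt_or_ge k 2 with hk2 | hk2
  · have hk1 : k = 1 := by omega
    subst hk1
    have hc1 : PowerSeries.coeff (1-1) ((v⁻¹) ^ (1-1) : K⟦X⟧) = 1 := by
      norm_num
    have hc2 : PowerSeries.coeff (1-1)
        ((X : K⟦X⟧) * ((v⁻¹) ^ 1 * PowerSeries.derivative K v)) = 0 := by
      have : (1:ℕ) - 1 = 0 := rfl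
      rw [this, PowerSeries.coeff_zero_eq_constantCoeff, map_mul,
        PowerSeries.constantCoeff_X, zero_mul]
    rw [hc1, hc2, if_pos rfl, add_zero]
  · rw [if_neg (by omega)]
    obtain ⟨t, rfl⟩ : ∃ t, k = t + 2 := ⟨k - 2, by omega⟩
    have e1 : (t + 2 : ℕ) - 1 = t + 1 := by omega
    rw [e1]
    have hstar := star (v⁻¹) t
    have hd : PowerSeries.derivative K (v⁻¹)
        = -(v⁻¹) ^ 2 * PowerSeries.derivative K v := PowerSeries.derivative_inv' v
    rw [PowerSeries.coeff_succ_X_mul]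
    rw [hstar, hd]
    have : (v⁻¹) ^ t * (-(v⁻¹) ^ 2 * PowerSeries.derivative K v)
        = -((v⁻¹) ^ (t + 2) * PowerSeries.derivative K v) := by
      ring
    rw [this, map_neg]
    ring

theorem coeff_sum_C_X_pow (P : K⟦X⟧) (m i : ℕ) :
    PowerSeries.coeff i (∑ j ∈ Finset.range m, PowerSeries.C (PowerSeries.coeff j P)
      * (X : K⟦X⟧) ^ j)
      = if i < m then PowerSeries.coeff i P else 0 := by
  rw [map_sum]
  simp_rw [PowerSeries.coeff_C_mul, PowerSeries.coeff_X_pow, mul_ite, mul_one, mul_zero]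
  rw [Finset.sum_ite_eq (Finset.range m) i (fun j => PowerSeries.coeff j P)]
  simp only [Finset.mem_range]

theorem coeff_hahn_sum {α : Type*} (s : Finset α) (F : α → LaurentSeries K) (d : ℤ) :
    (∑ i ∈ s, F i).coeff d = ∑ i ∈ s, (F i).coeff d :=
  map_sum (HahnSeries.coeff.addMonoidHom d) F s

theorem res_key {ψ u : K⟦X⟧} (hψ0 : PowerSeries.constantCoeff ψ = 0)
    (hψ1 : PowerSeries.coeff 1 ψ ≠ 0) (hu0 : PowerSeries.constantCoeff u ≠ 0)
    {m : ℕ} (hm : 1 ≤ m) :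
    ((ofPowerSeries ℤ K (ψ ^ m * pcomp u ψ))⁻¹
        * ofPowerSeries ℤ K (PowerSeries.derivative K ψ)).coeff (-1)
      = PowerSeries.coeff (m - 1) u⁻¹ := by
  classical
  have hψne : ψ ≠ 0 := by intro h; exact hψ1 (by rw [h, map_zero])
  have hιψ : ofPowerSeries ℤ K ψ ≠ 0 := ofPowerSeries_ne_zero hψne
  set L1 := ofPowerSeries ℤ K ψ with hL1
  have hL1ne : ∀ a : ℕ, L1 ^ a ≠ 0 := fun a => pow_ne_zero _ hιψ
  have hdvd : (X : K⟦X⟧) ^ m ∣ u⁻¹ - ∑ j ∈ Finset.range m,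
      PowerSeries.C (PowerSeries.coeff j u⁻¹) * (X : K⟦X⟧) ^ j := by
    rw [PowerSeries.X_pow_dvd_iff]
    intro i hi
    rw [map_sub, coeff_sum_C_X_pow, if_pos hi, sub_self]
  obtain ⟨Rr, hRr⟩ := hdvd
  have hVeq : u⁻¹ = (∑ j ∈ Finset.range m,
      PowerSeries.C (PowerSeries.coeff j u⁻¹) * (X : K⟦X⟧) ^ j) + X ^ m * Rr := by
    rw [← hRr]; ring
  have hw0 : PowerSeries.constantCoeff (pcomp u ψ) ≠ 0 := by
    rw [constantCoeff_pcomp]; exact hu0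
  have hcompV : pcomp u ψ * pcomp u⁻¹ ψ = 1 := by
    rw [← pcomp_mul hψ0, PowerSeries.mul_inv_cancel u hu0, pcomp_one]
  have hQcomp : pcomp (∑ j ∈ Finset.range m,
      PowerSeries.C (PowerSeries.coeff j u⁻¹) * (X : K⟦X⟧) ^ j) ψ
      = ∑ j ∈ Finset.range m, PowerSeries.C (PowerSeries.coeff j u⁻¹) * ψ ^ j := by
    rw [pcomp_sum]
    apply Finset.sum_congr rfl
    intro j _
    rw [pcomp_mul hψ0, pcomp_pow hψ0, pcomp_X hψ0, pcomp_C]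
  have hpcompV : pcomp u⁻¹ ψ = (∑ j ∈ Finset.range m,
      PowerSeries.C (PowerSeries.coeff j u⁻¹) * ψ ^ j) + ψ ^ m * pcomp Rr ψ := by
    conv_lhs => rw [hVeq]
    rw [pcomp_add, pcomp_mul hψ0, pcomp_pow hψ0, pcomp_X hψ0, hQcomp]
  have hDinv : (ofPowerSeries ℤ K (ψ ^ m * pcomp u ψ))⁻¹
      = (L1 ^ m)⁻¹ * ofPowerSeries ℤ K (pcomp u⁻¹ ψ) := by
    apply inv_eq_of_mul_eq_one_right
    rw [map_mul, map_pow, ← hL1]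
    have : L1 ^ m * ofPowerSeries ℤ K (pcomp u ψ)
        * ((L1 ^ m)⁻¹ * ofPowerSeries ℤ K (pcomp u⁻¹ ψ))
        = (L1 ^ m * (L1 ^ m)⁻¹)
          * (ofPowerSeries ℤ K (pcomp u ψ) * ofPowerSeries ℤ K (pcomp u⁻¹ ψ)) := by
      ring
    rw [this, mul_inv_cancel₀ (hL1ne m), ← map_mul, hcompV, map_one, one_mul]
  rw [hDinv, hpcompV, map_add, map_sum]
  rw [mul_add, add_mul]
  have hsec : (L1 ^ m)⁻¹ * ofPowerSeries ℤ K (ψ ^ m * pcomp Rr ψ)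
      * ofPowerSeries ℤ K (PowerSeries.derivative K ψ)
      = ofPowerSeries ℤ K (pcomp Rr ψ * PowerSeries.derivative K ψ) := by
    rw [map_mul, map_pow, ← hL1, inv_mul_cancel_left₀ (hL1ne m), ← map_mul]
  rw [hsec, HahnSeries.coeff_add, res_ofPowerSeries, add_zero]
  rw [Finset.mul_sum, Finset.sum_mul]
  have hterm : ∀ j ∈ Finset.range m,
      (L1 ^ m)⁻¹ * ofPowerSeries ℤ K (PowerSeries.C (PowerSeries.coeff j u⁻¹) * ψ ^ j)
        * ofPowerSeries ℤ K (PowerSeries.derivative K ψ)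
      = HahnSeries.C (PowerSeries.coeff j u⁻¹) *
        ((L1 ^ (m - j))⁻¹ * ofPowerSeries ℤ K (PowerSeries.derivative K ψ)) := by
    intro j hj
    simp only [Finset.mem_range] at hj
    have hinvsplit : (L1 ^ (m - j))⁻¹ = (L1 ^ m)⁻¹ * L1 ^ j := by
      apply inv_eq_of_mul_eq_one_right
      have hsplit : L1 ^ (m - j) * L1 ^ j = L1 ^ m := by
        rw [← _root_.pow_add]
        congr 1
        omega
      rw [mul_comm ((L1 ^ m)⁻¹), ← mul_assoc, hsplit, mul_inv_cancel₀ (hL1ne m)]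
    rw [map_mul, ofPowerSeries_C, map_pow, ← hL1, hinvsplit]
    ring
  rw [Finset.sum_congr rfl hterm]
  rw [coeff_hahn_sum]
  have hres : ∀ j ∈ Finset.range m,
      ((HahnSeries.C (PowerSeries.coeff j u⁻¹) *
        ((L1 ^ (m - j))⁻¹ * ofPowerSeries ℤ K (PowerSeries.derivative K ψ))).coeff (-1))
      = PowerSeries.coeff j u⁻¹ * (if m - j = 1 then 1 else 0) := by
    intro j hj
    simp only [Finset.mem_range] at hj
    have hC : (HahnSeries.C (PowerSeries.coeff j u⁻¹) : HahnSeries ℤ K)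
        = HahnSeries.single 0 (PowerSeries.coeff j u⁻¹) := rfl
    rw [hC, HahnSeries.coeff_single_zero_mul, hL1, res_psi_pow hψ0 hψ1 (by omega)]
  rw [Finset.sum_congr rfl hres]
  rw [Finset.sum_eq_single (m - 1)]
  · rw [if_pos (by omega), mul_one]
  · intro j hj hne
    simp only [Finset.mem_range] at hj
    rw [if_neg (by omega), mul_zero]
  · intro h
    exact absurd (Finset.mem_range.2 (by omega)) h

end FieldPart

theorem stmt3 {K : Type*} [Field K] (f φ ψ fhat : PowerSeries K)
    (hf0 : PowerSeries.constantCoeff f = 0) (hfX : f ≠ PowerSeries.X)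
    (hφ0 : PowerSeries.constantCoeff φ = 0) (hφ1 : PowerSeries.coeff 1 φ ≠ 0)
    (hψ0 : PowerSeries.constantCoeff ψ = 0)
    (hinv1 : pcomp φ ψ = PowerSeries.X) (hinv2 : pcomp ψ φ = PowerSeries.X)
    (hfhat : fhat = pcomp (pcomp φ f) ψ) :
    ind fhat = ind f := by
  classical
  open HahnSeries in
  -- coefficient-1 of ψ is nonzero
  have hφψ1 : PowerSeries.coeff 1 φ * PowerSeries.coeff 1 ψ = 1 := by
    have h := congrArg (PowerSeries.coeff 1) hinv1
    rw [coeff_pcomp, Finset.sum_range_succ, Finset.sum_range_one, pow_zero, pow_one] at h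
    simpa [PowerSeries.coeff_one, PowerSeries.coeff_X] using h
  have hψ1 : PowerSeries.coeff 1 ψ ≠ 0 := by
    intro h
    rw [h, mul_zero] at hφψ1
    exact zero_ne_one hφψ1
  have hψne : ψ ≠ 0 := by intro h; exact hψ1 (by rw [h, map_zero])
  -- order decomposition of X - f
  have hXfne : (PowerSeries.X : K⟦X⟧) - f ≠ 0 := sub_ne_zero_of_ne (Ne.symm hfX)
  have hlt : (PowerSeries.X - f : K⟦X⟧).order < ⊤ :=
    PowerSeries.order_finite_iff_ne_zero.2 hXfne
  set m : ℕ := ((PowerSeries.X - f : K⟦X⟧).order.toNat) with hmdef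
  set u : K⟦X⟧ := PowerSeries.divXPowOrder (PowerSeries.X - f) with hudef
  have hdecomp : (PowerSeries.X : K⟦X⟧) ^ m * u = PowerSeries.X - f :=
    PowerSeries.X_pow_order_mul_divXPowOrder
  have hcoeffm : PowerSeries.coeff m (PowerSeries.X - f) ≠ 0 := PowerSeries.coeff_order hXfne
  have hu0 : PowerSeries.constantCoeff u ≠ 0 := by
    intro h
    apply hcoeffm
    rw [← hdecomp]
    have h2 := PowerSeries.coeff_X_pow_mul u m 0
    rw [zero_add] at h2
    have h0 : PowerSeries.coeff 0 u = 0 := by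
      rw [PowerSeries.coeff_zero_eq_constantCoeff]; exact h
    rw [h2, h0]
  have hm1 : 1 ≤ m := by
    by_contra hcon
    have hm0 : m = 0 := by omega
    apply hcoeffm
    rw [hm0, map_sub]
    simp [hf0]
  -- the E/G decompositions
  have hE := Efun_spec (φ := φ) hf0
  have hG := Gfun_spec (φ := φ) hf0
  have hE0ne : PowerSeries.constantCoeff (Efun φ f) ≠ 0 := by
    rw [constantCoeff_Efun hf0]; exact hφ1
  have he : PowerSeries.constantCoeff (pcomp (Efun φ f) ψ) ≠ 0 := by
    rw [constantCoeff_pcomp]; exact hE0ne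
  have hwne0 : PowerSeries.constantCoeff (pcomp u ψ) ≠ 0 := by
    rw [constantCoeff_pcomp]; exact hu0
  have hP1ne : (ψ ^ m * pcomp u ψ) ≠ 0 :=
    mul_ne_zero (pow_ne_zero _ hψne) (fun h => hwne0 (by rw [h, map_zero]))
  -- X - fhat
  have hXfhat : PowerSeries.X - fhat = pcomp ((PowerSeries.X - f) * Efun φ f) ψ := by
    rw [hfhat, hE, pcomp_sub, hinv1]
  have hsplit : pcomp ((PowerSeries.X - f) * Efun φ f) ψ
      = (ψ ^ m * pcomp u ψ) * pcomp (Efun φ f) ψ := by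
    rw [pcomp_mul hψ0, ← hdecomp, pcomp_mul hψ0, pcomp_pow hψ0, pcomp_X hψ0]
  -- chain rule
  have hchain : pcomp (PowerSeries.derivative K φ) ψ * PowerSeries.derivative K ψ = 1 := by
    rw [← derivative_pcomp hψ0 φ, hinv1, PowerSeries.derivative_X]
  have hφ' : pcomp (PowerSeries.derivative K φ) ψ
      = pcomp (Efun φ f) ψ + (ψ ^ m * pcomp u ψ) * pcomp (Gfun φ f) ψ := by
    have hφd : PowerSeries.derivative K φ = Efun φ f + (PowerSeries.X - f) * Gfun φ f := by
      rw [hG]; ring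
    rw [hφd, pcomp_add, pcomp_mul hψ0, ← hdecomp, pcomp_mul hψ0, pcomp_pow hψ0, pcomp_X hψ0]
  -- the key Laurent series identity
  have key : (ofPowerSeries ℤ K (PowerSeries.X - fhat) : LaurentSeries K)⁻¹
      = (ofPowerSeries ℤ K (ψ ^ m * pcomp u ψ))⁻¹
          * ofPowerSeries ℤ K (PowerSeries.derivative K ψ)
        + ofPowerSeries ℤ K
            (pcomp (Gfun φ f) ψ * (pcomp (Efun φ f) ψ)⁻¹ * PowerSeries.derivative K ψ) := by
    apply inv_eq_of_mul_eq_one_right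
    rw [hXfhat, hsplit, map_mul]
    set A := ofPowerSeries ℤ K (ψ ^ m * pcomp u ψ) with hA
    set B := ofPowerSeries ℤ K (pcomp (Efun φ f) ψ) with hB
    have hAne : A ≠ 0 := ofPowerSeries_ne_zero hP1ne
    have hBinv : B * ofPowerSeries ℤ K ((pcomp (Efun φ f) ψ)⁻¹) = 1 := by
      rw [hB, ← map_mul, PowerSeries.mul_inv_cancel _ he, map_one]
    have hmain : (B + A * ofPowerSeries ℤ K (pcomp (Gfun φ f) ψ))
        * ofPowerSeries ℤ K (PowerSeries.derivative K ψ) = 1 := by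
      have : B + A * ofPowerSeries ℤ K (pcomp (Gfun φ f) ψ)
          = ofPowerSeries ℤ K (pcomp (Efun φ f) ψ
              + (ψ ^ m * pcomp u ψ) * pcomp (Gfun φ f) ψ) := by
        rw [map_add, map_mul, hA, hB]
      rw [this, ← hφ', ← map_mul, hchain, map_one]
    have expand : A * B * ((A⁻¹ * ofPowerSeries ℤ K (PowerSeries.derivative K ψ))
          + ofPowerSeries ℤ K
            (pcomp (Gfun φ f) ψ * (pcomp (Efun φ f) ψ)⁻¹ * PowerSeries.derivative K ψ))
        = (B + A * ofPowerSeries ℤ K (pcomp (Gfun φ f) ψ))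
            * ofPowerSeries ℤ K (PowerSeries.derivative K ψ)
          + (B * ofPowerSeries ℤ K ((pcomp (Efun φ f) ψ)⁻¹) - 1)
            * (A * ofPowerSeries ℤ K (pcomp (Gfun φ f) ψ)
                * ofPowerSeries ℤ K (PowerSeries.derivative K ψ))
          + (A * A⁻¹ - 1) * (B * ofPowerSeries ℤ K (PowerSeries.derivative K ψ)) := by
      rw [map_mul, map_mul]
      ring
    rw [expand, hmain, hBinv, mul_inv_cancel₀ hAne]
    ring
  have hfhatval : ind fhat = PowerSeries.coeff (m-1) u⁻¹ := by
    unfold ind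
    rw [key, HahnSeries.coeff_add, res_ofPowerSeries, add_zero, res_key hψ0 hψ1 hu0 hm1]
  have hfval : ind f = PowerSeries.coeff (m-1) u⁻¹ := by
    unfold ind
    rw [← hdecomp, map_mul, map_pow, ofPowerSeries_X, ← RatFunc.single_one_eq_pow, mul_inv,
      HahnSeries.inv_single (m : ℤ) (1:K), inv_one, ofPowerSeries_inv hu0,
      res_single_neg_mul hm1]
  rw [hfhatval, hfval]
end

section
/- Let K be a field, q ≥ 1 an integer, and f(z) = z(1 + Σ_{j≥q} a_j z^j) with a_q ≠ 0. Let k ≥ 1 be an integer such that a_{q+k} ≠ 0 and such that k ≠ q as elements of K (i.e., the image of k−q in K is nonzero). Then there exists c ∈ K such that, setting φ(z) = z(1 + c z^k), the conjugate φ ∘ f ∘ φ^{-1}(z) ≡ z(1 + a_q z^q + ⋯ + a_{q+k−1} z^{q+k−1}) mod z^{q+k+2}. Moreover one may take c = −a_{q+k}/(a_q(k−q)). -/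
set_option maxHeartbeats 1000000
set_option synthInstance.maxHeartbeats 400000


open PowerSeries Finset

lemma coeff_pow_eq_zero {K : Type*} [Field K] {ψ : PowerSeries K}
    (hψ : constantCoeff ψ = 0) {n i : ℕ} (h : n < i) :
    PowerSeries.coeff n (ψ ^ i) = 0 := by
  have hX : (X : PowerSeries K) ∣ ψ := X_dvd_iff.mpr hψ
  exact X_pow_dvd_iff.mp (pow_dvd_pow_of_dvd hX i) n h

lemma pcomp_coe {K : Type*} [Field K] (p : Polynomial K) (ψ : PowerSeries K)
    (hψ : constantCoeff ψ = 0) :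
    pcomp (p : PowerSeries K) ψ = Polynomial.aeval ψ p := by
  ext n
  have hdeg : p.natDegree < max (n + 1) (p.natDegree + 1) := by omega
  rw [Polynomial.aeval_eq_sum_range' hdeg]
  rw [pcomp, PowerSeries.coeff_mk, map_sum]
  rw [Finset.sum_subset (Finset.range_subset_range.mpr (le_max_left (n+1) (p.natDegree+1)))]
  · exact Finset.sum_congr rfl fun i _ => by
      rw [Polynomial.coeff_coe, map_smul, smul_eq_mul]
  · intro i _ hi
    rw [Finset.mem_range, not_lt] at hi
    rw [Polynomial.coeff_coe]
    rcases le_or_gt i p.natDegree with h | h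
    · rw [coeff_pow_eq_zero hψ (by omega), mul_zero]
    · rw [Polynomial.coeff_eq_zero_of_natDegree_lt h, zero_mul]

lemma coeff_pcomp_congr {K : Type*} [Field K] {A B ψ : PowerSeries K} {N : ℕ}
    (h : ∀ j < N, PowerSeries.coeff j A = PowerSeries.coeff j B) {i : ℕ} (hi : i < N) :
    PowerSeries.coeff i (pcomp A ψ) = PowerSeries.coeff i (pcomp B ψ) := by
  rw [pcomp, pcomp, PowerSeries.coeff_mk, PowerSeries.coeff_mk]
  exact Finset.sum_congr rfl fun j hj => by
    rw [Finset.mem_range] at hj; rw [h j (by omega)]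

lemma aeval_X_powerSeries {K : Type*} [Field K] (p : Polynomial K) :
    Polynomial.aeval (PowerSeries.X : PowerSeries K) p = (p : PowerSeries K) := by
  have : (Polynomial.aeval (PowerSeries.X : PowerSeries K) : Polynomial K →ₐ[K] PowerSeries K)
      = Polynomial.coeToPowerSeries.algHom K := by
    apply Polynomial.algHom_ext; simp
  exact congrFun (congrArg DFunLike.coe this) p

lemma binom_mod {K : Type*} [Field K] (N t m : ℕ) (y : PowerSeries K)
    (ht : 1 ≤ t) (hy : (X : PowerSeries K) ^ t ∣ y) (hm : 2 ≤ m) (hN : N + 2 ≤ m + 2 * t) :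
    (X : PowerSeries K) ^ N ∣
      (X + y) ^ m - (X ^ m + (m : PowerSeries K) * X ^ (m - 1) * y) := by
  obtain ⟨u, rfl⟩ := hy
  obtain ⟨m', rfl⟩ : ∃ m', m = m' + 2 := ⟨m - 2, by omega⟩
  have hexp : ((X : PowerSeries K) + X ^ t * u) ^ (m' + 2) =
      (∑ i ∈ Finset.range (m' + 1),
          X ^ i * (X ^ t * u) ^ (m' + 2 - i) * ((m' + 2).choose i : PowerSeries K)) +
        ((((m' + 2 : ℕ) : PowerSeries K)) * X ^ (m' + 1) * (X ^ t * u) + X ^ (m' + 2)) := by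
    rw [add_pow, Finset.sum_range_succ, Finset.sum_range_succ]
    have e1 : m' + 2 - (m' + 1) = 1 := by omega
    have e2 : m' + 2 - (m' + 2) = 0 := by omega
    rw [e1, e2, Nat.choose_self, Nat.choose_succ_self_right]
    push_cast
    ring
  rw [hexp]
  have e3 : m' + 2 - 1 = m' + 1 := by omega
  rw [e3]
  have hsub : (∑ i ∈ Finset.range (m' + 1),
          X ^ i * (X ^ t * u) ^ (m' + 2 - i) * ((m' + 2).choose i : PowerSeries K)) +
        ((((m' + 2 : ℕ) : PowerSeries K)) * X ^ (m' + 1) * (X ^ t * u) + X ^ (m' + 2)) -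
        (X ^ (m' + 2) + ((m' + 2 : ℕ) : PowerSeries K) * X ^ (m' + 1) * (X ^ t * u)) =
      ∑ i ∈ Finset.range (m' + 1),
          X ^ i * (X ^ t * u) ^ (m' + 2 - i) * ((m' + 2).choose i : PowerSeries K) := by
    ring
  rw [hsub]
  apply Finset.dvd_sum
  intro i hi
  rw [Finset.mem_range] at hi
  set j := m' + 2 - i with hj
  have hj2 : 2 ≤ j := by omega
  have key : (X : PowerSeries K) ^ i * (X ^ t * u) ^ j * ((m' + 2).choose i : PowerSeries K)
      = X ^ (i + t * j) * (u ^ j * ((m' + 2).choose i : PowerSeries K)) := by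
    rw [mul_pow, ← pow_mul, pow_add]; ring
  rw [key]
  apply Dvd.dvd.mul_right
  apply pow_dvd_pow
  have h1 : (t - 1) * 2 ≤ (t - 1) * j := Nat.mul_le_mul_left _ hj2
  have h2 : (t - 1) * j = t * j - j := Nat.sub_one_mul t j
  have h3 : j ≤ t * j := Nat.le_mul_of_pos_left j (by omega)
  omega

theorem stmt4 {K : Type*} [Field K] (q k : ℕ) (hq : 1 ≤ q) (hk : 1 ≤ k)
    (a : ℕ → K) (haq : a q ≠ 0) (hak : a (q + k) ≠ 0)
    (hkq : (k : K) - (q : K) ≠ 0)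
    (f : PowerSeries K)
    (hf : ∀ n, PowerSeries.coeff n f =
      if n = 1 then 1 else if q + 1 ≤ n then a (n - 1) else 0)
    (c : K) (hc : c = -a (q + k) / (a q * ((k : K) - (q : K))))
    (φ ψ : PowerSeries K)
    (hφ : φ = PowerSeries.X + PowerSeries.C c * PowerSeries.X ^ (k + 1))
    (hψ0 : PowerSeries.constantCoeff ψ = 0)
    (hinv1 : pcomp φ ψ = PowerSeries.X) (hinv2 : pcomp ψ φ = PowerSeries.X) :
    ∀ i < q + k + 2,
      PowerSeries.coeff i (pcomp (pcomp φ f) ψ) =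
      PowerSeries.coeff i (PowerSeries.X +
        ∑ j ∈ Finset.Ico q (q + k), PowerSeries.C (a j) * PowerSeries.X ^ (j + 1)) := by
  intro i hi
  set N := q + k + 2 with hN
  set g : PowerSeries K :=
    PowerSeries.X + ∑ j ∈ Finset.Ico q (q + k), PowerSeries.C (a j) * PowerSeries.X ^ (j + 1)
    with hg
  set φp : Polynomial K := Polynomial.X + Polynomial.C c * Polynomial.X ^ (k + 1) with hφp
  set gp : Polynomial K :=
    Polynomial.X + ∑ j ∈ Finset.Ico q (q + k), Polynomial.C (a j) * Polynomial.X ^ (j + 1)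
    with hgp
  have hφc : ((φp : Polynomial K) : PowerSeries K) = φ := by
    rw [hφ, hφp]; push_cast; ring
  have hcoe : ∀ (p : Polynomial K),
      (Polynomial.coeToPowerSeries.algHom K) p = (p : PowerSeries K) := by
    intro p
    rw [Polynomial.coeToPowerSeries.algHom_apply, Algebra.algebraMap_self, PowerSeries.map_id, id_eq]
  have hgc : ((gp : Polynomial K) : PowerSeries K) = g := by
    rw [hg, hgp, ← Polynomial.coeToPowerSeries.ringHom_apply, map_add, map_sum]
    simp
  have hf0 : constantCoeff f = 0 := by
    have := hf 0
    simp only [if_neg (by omega : ¬(0 = 1)), if_neg (by omega : ¬(q + 1 ≤ 0))] at this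
    rw [← coeff_zero_eq_constantCoeff_apply]; exact this
  have hφ0 : constantCoeff φ = 0 := by
    rw [hφ]; simp
  -- the main congruence
  have main : (X : PowerSeries K) ^ N ∣ pcomp φ f - pcomp g φ := by
    set S : PowerSeries K := ∑ j ∈ Finset.Ico q (q + k + 1), C (a j) * X ^ (j + 1) with hS
    set F : PowerSeries K := X + S with hF
    have hfF : (X : PowerSeries K) ^ N ∣ f - F := by
      rw [X_pow_dvd_iff]
      intro m hm
      rw [map_sub, sub_eq_zero, hf m, hF, hS, map_add, PowerSeries.coeff_X, map_sum]
      simp only [PowerSeries.coeff_C_mul, PowerSeries.coeff_X_pow]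
      by_cases h1 : q + 1 ≤ m
      · have hm1 : m ≠ 1 := by omega
        rw [if_neg hm1, if_neg hm1, if_pos h1, zero_add]
        rw [Finset.sum_eq_single_of_mem (m - 1)
          (Finset.mem_Ico.mpr ⟨by omega, by omega⟩)]
        · rw [if_pos (by omega), mul_one]
        · intro j hj hne
          rw [if_neg (by omega), mul_zero]
      · rw [if_neg h1]
        have hz : ∑ j ∈ Finset.Ico q (q + k + 1), a j * (if m = j + 1 then 1 else 0) = 0 := by
          apply Finset.sum_eq_zero
          intro j hj
          rw [Finset.mem_Ico] at hj
          rw [if_neg (by omega), mul_zero]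
        rw [hz, add_zero]
    set π := Ideal.Quotient.mk (Ideal.span {(X : PowerSeries K) ^ N}) with hπ
    have hdvd : ∀ A B : PowerSeries K, π A = π B ↔ (X : PowerSeries K) ^ N ∣ A - B := by
      intro A B
      rw [hπ, Ideal.Quotient.eq, Ideal.mem_span_singleton]
    have hx0 : ∀ n, N ≤ n → (π X) ^ n = 0 := by
      intro n hn
      rw [← map_pow, hπ, Ideal.Quotient.eq_zero_iff_mem, Ideal.mem_span_singleton]
      exact pow_dvd_pow _ hn
    have hpf : pcomp φ f = f + C c * f ^ (k + 1) := by
      rw [← hφc, pcomp_coe _ _ hf0, hφp]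
      simp [PowerSeries.algebraMap_apply]
    have hpg : pcomp g φ = φ + ∑ j ∈ Finset.Ico q (q + k), C (a j) * φ ^ (j + 1) := by
      rw [← hgc, pcomp_coe _ _ hφ0, hgp, map_add, map_sum]
      simp [PowerSeries.algebraMap_apply]
    have hπf : π f = π F := (hdvd _ _).mpr hfF
    have hSsum : π S = ∑ j ∈ Finset.Ico q (q + k + 1), π (C (a j)) * (π X) ^ (j + 1) := by
      rw [hS, map_sum]
      exact Finset.sum_congr rfl fun j _ => by rw [map_mul, map_pow]
    have h3 : (π X) ^ k * π S = π (C (a q)) * (π X) ^ (q + k + 1) := by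
      rw [hSsum, Finset.mul_sum]
      rw [Finset.sum_eq_single_of_mem q (Finset.mem_Ico.mpr ⟨le_refl q, by omega⟩)]
      · rw [← mul_assoc, mul_comm ((π X) ^ k), mul_assoc, ← pow_add]
        congr 2
        omega
      · intro j hj hne
        rw [Finset.mem_Ico] at hj
        rw [← mul_assoc, mul_comm ((π X) ^ k), mul_assoc, ← pow_add,
          hx0 (k + (j + 1)) (by omega), mul_zero]
    have h2 : (π F) ^ (k + 1) = (π X) ^ (k + 1)
        + ((k + 1 : ℕ) : PowerSeries K ⧸ Ideal.span {(X : PowerSeries K) ^ N})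
          * (π (C (a q)) * (π X) ^ (q + k + 1)) := by
      have hSdvd : (X : PowerSeries K) ^ (q + 1) ∣ S := by
        apply Finset.dvd_sum
        intro j hj
        rw [Finset.mem_Ico] at hj
        exact Dvd.dvd.mul_left (pow_dvd_pow X (by omega)) _
      have hb := binom_mod N (q + 1) (k + 1) S (by omega) hSdvd (by omega) (by omega)
      have hb2 := (hdvd _ _).mpr hb
      have e : k + 1 - 1 = k := by omega
      calc (π F) ^ (k + 1) = π ((X + S) ^ (k + 1)) := by rw [hF, map_pow]
        _ = π (X ^ (k + 1) + ((k + 1 : ℕ) : PowerSeries K) * X ^ (k + 1 - 1) * S) := hb2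
        _ = (π X) ^ (k + 1)
            + ((k + 1 : ℕ) : PowerSeries K ⧸ Ideal.span {(X : PowerSeries K) ^ N})
              * (π (C (a q)) * (π X) ^ (q + k + 1)) := by
          rw [map_add, map_mul, map_mul, map_pow, map_pow, map_natCast, e, mul_assoc, h3]
    have h4 : ∀ j ∈ Finset.Ico q (q + k), π (φ ^ (j + 1)) = (π X) ^ (j + 1)
        + ((j + 1 : ℕ) : PowerSeries K ⧸ Ideal.span {(X : PowerSeries K) ^ N})
          * π (C c) * (π X) ^ (j + k + 1) := by
      intro j hj
      rw [Finset.mem_Ico] at hj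
      have hb := binom_mod N (k + 1) (j + 1) (C c * X ^ (k + 1)) (by omega)
        (Dvd.dvd.mul_left dvd_rfl _) (by omega) (by omega)
      have hb2 := (hdvd _ _).mpr hb
      rw [hφ, hb2, map_add, map_mul, map_mul, map_pow, map_natCast, map_mul, map_pow, map_pow]
      have e : j + 1 - 1 = j := by omega
      rw [e]
      rw [mul_assoc, mul_assoc, mul_comm (π (C c)), ← mul_assoc ((π X) ^ j), ← pow_add]
      have e2 : j + (k + 1) = j + k + 1 := by omega
      rw [e2]
      ring
    have hπφ : π φ = π X + π (C c) * (π X) ^ (k + 1) := by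
      rw [hφ, map_add, map_mul, map_pow]
    have hπF : π F = π X + ((∑ j ∈ Finset.Ico q (q + k), π (C (a j)) * (π X) ^ (j + 1))
        + π (C (a (q + k))) * (π X) ^ (q + k + 1)) := by
      rw [hF, map_add, hSsum, Finset.sum_Ico_succ_top (by omega : q ≤ q + k)]
    have hsum : ∑ j ∈ Finset.Ico q (q + k), π (C (a j) * φ ^ (j + 1)) =
        (∑ j ∈ Finset.Ico q (q + k), π (C (a j)) * (π X) ^ (j + 1))
        + π (C (a q)) * (((q + 1 : ℕ) : PowerSeries K ⧸ Ideal.span {(X : PowerSeries K) ^ N})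
            * π (C c) * (π X) ^ (q + k + 1)) := by
      have step : ∀ j ∈ Finset.Ico q (q + k), π (C (a j) * φ ^ (j + 1)) =
          π (C (a j)) * (π X) ^ (j + 1)
          + π (C (a j)) * (((j + 1 : ℕ) : PowerSeries K ⧸ Ideal.span {(X : PowerSeries K) ^ N})
              * π (C c) * (π X) ^ (j + k + 1)) := by
        intro j hj
        rw [map_mul, h4 j hj, mul_add]
      rw [Finset.sum_congr rfl step, Finset.sum_add_distrib]
      congr 1
      rw [Finset.sum_eq_single_of_mem q (Finset.mem_Ico.mpr ⟨le_refl q, by omega⟩)]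
      intro j hj hne
      rw [Finset.mem_Ico] at hj
      obtain ⟨hj1, hj2⟩ := hj
      have hne' : q + 1 ≤ j := by omega
      rw [hx0 (j + k + 1) (by omega), mul_zero, mul_zero]
    have hscalar : a (q + k) + ((k + 1 : ℕ) : K) * c * a q = ((q + 1 : ℕ) : K) * a q * c := by
      rw [hc]
      field_simp
      push_cast
      ring
    have hs2 : π (C (a (q + k)))
        + ((k + 1 : ℕ) : PowerSeries K ⧸ Ideal.span {(X : PowerSeries K) ^ N})
          * π (C c) * π (C (a q)) =
        ((q + 1 : ℕ) : PowerSeries K ⧸ Ideal.span {(X : PowerSeries K) ^ N})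
          * π (C (a q)) * π (C c) := by
      have := congrArg (π.comp (C (R := K))) hscalar
      simpa only [map_add, map_mul, map_natCast, RingHom.coe_comp, Function.comp_apply] using this
    rw [← hdvd, hpf, hpg]
    rw [map_add, map_add, map_mul, map_pow, hπf, map_sum]
    rw [h2, hπφ, hπF, hsum]
    linear_combination hs2 * (π X) ^ (q + k + 1)
  -- transfer through ψ
  have h4 : PowerSeries.coeff i (pcomp (pcomp φ f) ψ)
      = PowerSeries.coeff i (pcomp (pcomp g φ) ψ) := by
    apply coeff_pcomp_congr (N := N) _ hi
    intro j hj
    have := X_pow_dvd_iff.mp main j hj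
    rw [map_sub, sub_eq_zero] at this
    exact this
  have h5 : pcomp (pcomp g φ) ψ = g := by
    have e1 : pcomp g φ = ((gp.comp φp : Polynomial K) : PowerSeries K) := by
      rw [← hgc, ← hφc, pcomp_coe _ _ (by rw [hφc]; exact hφ0)]
      have := Polynomial.aeval_algHom_apply (Polynomial.coeToPowerSeries.algHom K) φp gp
      rw [hcoe, hcoe] at this
      rw [this, Polynomial.comp_eq_aeval]
    rw [e1, pcomp_coe _ _ hψ0, Polynomial.aeval_comp]
    have e2 : Polynomial.aeval ψ φp = pcomp φ ψ := by
      rw [← hφc, pcomp_coe _ _ hψ0]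
    rw [e2, hinv1, aeval_X_powerSeries, hgc]
  rw [h4, h5]
end

section
/- Let p be a prime, K a field of characteristic p, and f ∈ K[[ζ]] a wildly ramified power series (f(0)=0, f'(0)=1, f(ζ) ≠ ζ). Define Δ_0(ζ) = ζ and Δ_m(ζ) = Δ_{m−1}(f(ζ)) − Δ_{m−1}(ζ) for m ≥ 1. Then for every integer m ≥ 1, ord_ζ(Δ_m) − ord_ζ(Δ_{m−1}) ≥ ord_ζ(Δ_1) − 1. -/
open PowerSeries

private lemma powdiff {K : Type*} [Field K] (f : PowerSeries K)
    (h0 : PowerSeries.constantCoeff f = 0) (q : ℕ)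
    (hq : ∀ i < q, PowerSeries.coeff i (f - PowerSeries.X) = 0) :
    ∀ k n, n + 1 < k + q →
      PowerSeries.coeff n (f ^ k) = PowerSeries.coeff n ((PowerSeries.X : PowerSeries K) ^ k) := by
  intro k
  induction k with
  | zero => intro n _; rfl
  | succ k ih =>
    intro n hn
    have key : f ^ (k + 1) - (PowerSeries.X : PowerSeries K) ^ (k + 1)
        = f * (f ^ k - PowerSeries.X ^ k) + (f - PowerSeries.X) * PowerSeries.X ^ k := by ring
    have h1 : PowerSeries.coeff n (f * (f ^ k - PowerSeries.X ^ k)) = 0 := by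
      rw [PowerSeries.coeff_mul]
      apply Finset.sum_eq_zero
      rintro ⟨i, j⟩ hij
      rw [Finset.HasAntidiagonal.mem_antidiagonal] at hij
      rcases Nat.eq_zero_or_pos i with hi | hi
      · subst hi
        simp [PowerSeries.coeff_zero_eq_constantCoeff, h0]
      · have hj : j + 1 < k + q := by omega
        rw [map_sub, ih j hj, sub_self, mul_zero]
    have h2 : PowerSeries.coeff n ((f - PowerSeries.X) * PowerSeries.X ^ k) = 0 := by
      rw [PowerSeries.coeff_mul]
      apply Finset.sum_eq_zero
      rintro ⟨i, j⟩ hij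
      rw [Finset.HasAntidiagonal.mem_antidiagonal] at hij
      rw [PowerSeries.coeff_X_pow]
      by_cases hj : j = k
      · subst hj
        rw [hq i (by omega), zero_mul]
      · simp [hj]
    have h3 : PowerSeries.coeff n (f ^ (k + 1) - PowerSeries.X ^ (k + 1)) = 0 := by
      rw [key, map_add, h1, h2, add_zero]
    rw [map_sub] at h3
    exact sub_eq_zero.mp h3

private lemma keylem {K : Type*} [Field K] (f g : PowerSeries K)
    (h0 : PowerSeries.constantCoeff f = 0) (q r : ℕ)
    (hq : ∀ i < q, PowerSeries.coeff i (f - PowerSeries.X) = 0)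
    (hg : ∀ i < r, PowerSeries.coeff i g = 0) :
    ∀ n, n + 1 < r + q → PowerSeries.coeff n (pcomp g f - g) = 0 := by
  intro n hn
  have e2 : PowerSeries.coeff n g
      = ∑ k ∈ Finset.range (n + 1),
          PowerSeries.coeff k g * PowerSeries.coeff n ((PowerSeries.X : PowerSeries K) ^ k) := by
    simp [PowerSeries.coeff_X_pow, Finset.sum_ite_eq]
  rw [map_sub]
  rw [show (PowerSeries.coeff n) (pcomp g f)
      = ∑ k ∈ Finset.range (n + 1),
          PowerSeries.coeff k g * PowerSeries.coeff n (f ^ k) from by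
    rw [pcomp, PowerSeries.coeff_mk]]
  rw [e2, ← Finset.sum_sub_distrib]
  apply Finset.sum_eq_zero
  intro k _
  by_cases hkr : k < r
  · rw [hg k hkr, zero_mul, zero_mul, sub_self]
  · rw [powdiff f h0 q hq k n (by omega), sub_self]

private lemma pcompX {K : Type*} [Field K] (f : PowerSeries K)
    (h0 : PowerSeries.constantCoeff f = 0) :
    pcomp PowerSeries.X f = f := by
  ext n
  rw [pcomp, PowerSeries.coeff_mk]
  rcases n with _ | n
  · simp [PowerSeries.coeff_zero_eq_constantCoeff, h0]
  · simp [PowerSeries.coeff_X, Finset.sum_ite_eq]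

private lemma pcomp_zero_s8 {K : Type*} [Field K] (f : PowerSeries K) :
    pcomp 0 f = 0 := by
  ext n
  simp [pcomp]

theorem stmt8 {K : Type*} [Field K] (p : ℕ) (hp : p.Prime) [CharP K p]
    (f : PowerSeries K) (h0 : PowerSeries.constantCoeff f = 0)
    (h1 : PowerSeries.coeff 1 f = 1) (hfX : f ≠ PowerSeries.X)
    (Δ : ℕ → PowerSeries K) (hΔ0 : Δ 0 = PowerSeries.X)
    (hΔ : ∀ m, Δ (m + 1) = pcomp (Δ m) f - Δ m) :
    ∀ m, 1 ≤ m → (Δ (m - 1)).order + ((Δ 1).order - 1) ≤ (Δ m).order := by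
  intro m hm
  obtain ⟨m', rfl⟩ : ∃ m', m = m' + 1 := ⟨m - 1, by omega⟩
  simp only [Nat.add_sub_cancel]
  have hΔ1 : Δ 1 = f - PowerSeries.X := by
    rw [hΔ 0, hΔ0, pcompX f h0]
  by_cases hz : Δ m' = 0
  · have : Δ (m' + 1) = 0 := by rw [hΔ m', hz, pcomp_zero_s8, sub_zero]
    rw [this, PowerSeries.order_eq_top.mpr rfl]
    exact le_top
  · have hΔ1ne : Δ 1 ≠ 0 := by
      rw [hΔ1, sub_ne_zero]; exact hfX
    set qn : ℕ := (Δ 1).order.toNat with hqdef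
    set rn : ℕ := (Δ m').order.toNat with hrdef
    have hqn : (qn : ℕ∞) = (Δ 1).order := ENat.coe_toNat (PowerSeries.order_eq_top.not.mpr hΔ1ne)
    have hrn : (rn : ℕ∞) = (Δ m').order := ENat.coe_toNat (PowerSeries.order_eq_top.not.mpr hz)
    have hq : ∀ i < qn, PowerSeries.coeff i (f - PowerSeries.X) = 0 := by
      intro i hi
      rw [← hΔ1]
      exact PowerSeries.coeff_of_lt_order i (by rw [← hqn]; exact_mod_cast hi)
    have hg : ∀ i < rn, PowerSeries.coeff i (Δ m') = 0 := by
      intro i hi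
      exact PowerSeries.coeff_of_lt_order i (by rw [← hrn]; exact_mod_cast hi)
    have hq1 : 1 ≤ qn := by
      have h01 : (1 : ℕ∞) ≤ (Δ 1).order := by
        apply PowerSeries.nat_le_order
        intro i hi
        interval_cases i
        rw [hΔ1, map_sub]
        simp [PowerSeries.coeff_zero_eq_constantCoeff, h0]
      rw [← hqn] at h01
      exact_mod_cast h01
    rw [← hqn, ← hrn]
    have hcast : (rn : ℕ∞) + ((qn : ℕ∞) - 1) = ((rn + (qn - 1) : ℕ) : ℕ∞) := by
      rw [Nat.cast_add, ENat.coe_sub, Nat.cast_one]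
    rw [hcast]
    apply PowerSeries.nat_le_order
    intro i hi
    rw [hΔ m']
    exact keylem f (Δ m') h0 qn rn hq hg i (by omega)
end

section
/- Let K be a field of characteristic 2 and f ∈ K[[z]] with q = mult(f) − 1 ≥ 1. Then for every odd integer n ≥ 1: ind(f^n) = ind(f) + 1 if q is even and n ≡ 3 (mod 4), and ind(f^n) = ind(f) otherwise. -/
namespace StmtAux16
open PowerSeries Finset
variable {K : Type*} [Field K]

lemma coeff_pcomp (f g : K⟦X⟧) (m : ℕ) :
    coeff m (pcomp f g) = ∑ k ∈ range (m+1), coeff k f * coeff m (g ^ k) := by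
  simp [pcomp]

lemma mul_coeff_congr {A A' B : K⟦X⟧} {M : ℕ} (h : ∀ i ≤ M, coeff i A = coeff i A')
    {m : ℕ} (hm : m ≤ M) : coeff m (A * B) = coeff m (A' * B) := by
  rw [coeff_mul, coeff_mul]
  refine Finset.sum_congr rfl fun p hp => ?_
  rw [Finset.HasAntidiagonal.mem_antidiagonal] at hp
  rw [h p.1 (le_trans (by omega) hm)]

lemma pow_coeff_congr {g₁ g₂ : K⟦X⟧} {M : ℕ} (h : ∀ i ≤ M, coeff i g₁ = coeff i g₂)
    (k : ℕ) : ∀ m ≤ M, coeff m (g₁ ^ k) = coeff m (g₂ ^ k) := by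
  induction k with
  | zero => simp
  | succ k ih =>
    intro m hm
    rw [pow_succ, pow_succ, mul_comm (g₁ ^ k), mul_comm (g₂ ^ k)]
    rw [coeff_mul, coeff_mul]
    refine Finset.sum_congr rfl fun p hp => ?_
    rw [Finset.HasAntidiagonal.mem_antidiagonal] at hp
    rw [h p.1 (le_trans (by omega) hm), ih p.2 (le_trans (by omega) hm)]

lemma pcomp_coeff_congr (f : K⟦X⟧) {g₁ g₂ : K⟦X⟧} {M : ℕ}
    (h : ∀ i ≤ M, coeff i g₁ = coeff i g₂) {m : ℕ} (hm : m ≤ M) :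
    coeff m (pcomp f g₁) = coeff m (pcomp f g₂) := by
  rw [coeff_pcomp, coeff_pcomp]
  exact Finset.sum_congr rfl fun k _ => by rw [pow_coeff_congr h k m hm]

lemma coeff_X_pow_mul'' (p : K⟦X⟧) (n m : ℕ) :
    coeff m (X ^ n * p) = if n ≤ m then coeff (m - n) p else 0 := by
  split_ifs with h
  · obtain ⟨d, rfl⟩ : ∃ d, m = d + n := ⟨m - n, by omega⟩
    rw [show d + n - n = d by omega, coeff_X_pow_mul]
  · rw [coeff_mul]
    refine Finset.sum_eq_zero fun p hp => ?_
    rw [Finset.HasAntidiagonal.mem_antidiagonal] at hp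
    rw [coeff_X_pow, if_neg (by omega), zero_mul]

lemma pow_vanish {s : K⟦X⟧} {q : ℕ} (hs : ∀ i ≤ q, coeff i s = 0) :
    ∀ (k j : ℕ), j < k * (q+1) → coeff j (s ^ k) = 0 := by
  intro k
  induction k with
  | zero => intro j h; omega
  | succ k ih =>
    intro j hj
    rw [pow_succ, mul_comm, coeff_mul]
    refine Finset.sum_eq_zero fun p hp => ?_
    rw [Finset.HasAntidiagonal.mem_antidiagonal] at hp
    by_cases h1 : p.1 ≤ q
    · rw [hs p.1 h1, zero_mul]
    · have : (k+1)*(q+1) = k*(q+1)+(q+1) := by ring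
      rw [ih p.2 (by omega), mul_zero]

lemma pow_add_coeff {q : ℕ} {s : K⟦X⟧} (hs : ∀ i ≤ q, coeff i s = 0) (k : ℕ) :
    ∀ m ≤ 2*q+1, coeff m ((X + s) ^ k) =
      coeff m (X ^ k) + (k : K) * coeff m (X ^ (k-1) * s) := by
  induction k with
  | zero => intro m hm; simp
  | succ k ih =>
    intro m hm
    rcases Nat.eq_zero_or_pos k with rfl | hk
    · simp [coeff_X_pow_mul'' s 0 m]
    obtain ⟨j, rfl⟩ : ∃ j, k = j + 1 := ⟨k - 1, by omega⟩
    have hA : ∀ i ≤ 2*q+1, coeff i ((X + s) ^ (j+1)) =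
        coeff i (X ^ (j+1) + C ((j+1 : ℕ) : K) * (X ^ j * s)) := by
      intro i hi
      rw [ih i hi, map_add, coeff_C_mul, Nat.add_sub_cancel]
    rw [pow_succ, mul_coeff_congr hA hm]
    have e1 : (X ^ (j+1) + C ((j+1 : ℕ) : K) * (X ^ j * s)) * (X + s)
        = X ^ (j+1+1) + C (((j+1 : ℕ) : K) + 1) * (X ^ (j+1) * s)
          + C ((j+1 : ℕ) : K) * (X ^ j * s ^ 2) := by
      rw [map_add, map_one]
      ring
    have e2 : coeff m (X ^ j * s ^ 2) = 0 := by
      rw [coeff_X_pow_mul'']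
      split_ifs with h
      · exact pow_vanish hs 2 _ (by omega)
      · rfl
    have h3 : (j + 1 + 1 : ℕ) - 1 = j + 1 := by omega
    rw [e1, map_add, map_add, coeff_C_mul, coeff_C_mul, e2, mul_zero, add_zero, h3]
    push_cast
    ring

lemma compB {q : ℕ} (hq : 1 ≤ q) {f s : K⟦X⟧}
    (h0 : ∀ i, i ≤ q → i ≠ 1 → coeff i f = 0) (h1 : coeff 1 f = 1)
    (hs : ∀ i ≤ q, coeff i s = 0) :
    ∀ m ≤ 2*q+1, coeff m (pcomp f (X + s)) =
      coeff m f + coeff m s +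
      (if m = 2*q+1 then ((q : K)+1) * coeff (q+1) f * coeff (q+1) s else 0) := by
  intro m hm
  rw [coeff_pcomp]
  have step1 : ∀ k ∈ range (m+1), coeff k f * coeff m ((X + s) ^ k)
      = coeff k f * coeff m (X ^ k)
        + coeff k f * ((k : K) * coeff m (X ^ (k-1) * s)) := by
    intro k _
    rw [pow_add_coeff hs k m hm]
    ring
  rw [Finset.sum_congr rfl step1, Finset.sum_add_distrib]
  have first : ∑ k ∈ range (m+1), coeff k f * coeff m (X ^ k) = coeff m f := by
    simp only [coeff_X_pow, mul_ite, mul_one, mul_zero]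
    rw [Finset.sum_ite_eq]
    simp [Nat.lt_succ_iff]
  rw [first]
  have step2 : ∀ k ∈ range (m+1), coeff k f * ((k : K) * coeff m (X ^ (k-1) * s))
      = (if k = 1 then coeff m s else 0)
        + (if k = q+1 then (if m = 2*q+1 then ((q : K)+1) * coeff (q+1) f * coeff (q+1) s else 0) else 0) := by
    intro k hk
    rw [mem_range] at hk
    rw [coeff_X_pow_mul'']
    rcases eq_or_ne k 1 with rfl | hk1
    · rw [if_pos (by omega : 1-1 ≤ m), h1]
      rw [if_pos rfl, if_neg (by omega : ¬(1:ℕ) = q+1), add_zero]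
      simp
    rcases Nat.eq_zero_or_pos k with rfl | hkpos
    · rw [if_neg hk1, if_neg (by omega : ¬(0:ℕ) = q+1)]
      simp
    rcases lt_or_ge k (q+1) with hkq | hkq
    · rw [h0 k (by omega) hk1, if_neg hk1, if_neg (by omega : ¬k = q+1)]
      simp
    rcases eq_or_ne k (q+1) with rfl | hkq1
    · rw [if_neg (by omega : ¬(q+1) = 1), if_pos rfl]
      rw [if_pos (by omega : q+1-1 ≤ m)]
      rcases eq_or_ne m (2*q+1) with rfl | hm2
      · rw [if_pos rfl]
        have h9 : 2*q+1 - (q+1-1) = q+1 := by omega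
        rw [h9]
        push_cast
        ring
      · rw [if_neg hm2, hs (m - (q+1-1)) (by omega), mul_zero, mul_zero, zero_add]
    · have hz : coeff (m - (k-1)) s = 0 := hs _ (by omega)
      rw [if_neg hk1, if_neg hkq1, add_zero]
      split_ifs with h
      · rw [hz, mul_zero, mul_zero]
      · rw [mul_zero, mul_zero]
  rw [Finset.sum_congr rfl step2, Finset.sum_add_distrib, Finset.sum_ite_eq', Finset.sum_ite_eq']
  by_cases hm2 : m = 2*q+1
  · subst hm2
    rw [if_pos (show (1:ℕ) ∈ range (2*q+1+1) from mem_range.2 (by omega)),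
        if_pos (show q+1 ∈ range (2*q+1+1) from mem_range.2 (by omega))]
    ring
  · rcases Nat.eq_zero_or_pos m with rfl | hmpos
    · rw [if_neg (show (1:ℕ) ∉ range (0+1) by simp),
          if_neg (show q+1 ∉ range (0+1) by simp), hs 0 (by omega), if_neg hm2]
      ring
    · rw [if_pos (show (1:ℕ) ∈ range (m+1) from mem_range.2 (by omega)), if_neg hm2]
      by_cases hqm : q+1 ∈ range (m+1)
      · rw [if_pos hqm]
        ring
      · rw [if_neg hqm]
        ring

lemma piter_coeff {q : ℕ} (hq : 1 ≤ q) {f : K⟦X⟧}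
    (hw0 : ∀ i < q+1, coeff i (f - X) = 0) (k : ℕ) :
    ∀ m ≤ 2*q+1, coeff m (piter f k) =
      coeff m (X : K⟦X⟧) + (k : K) * coeff m (f - X)
      + (if m = 2*q+1 then ((Nat.choose k 2 * (q+1) : ℕ) : K) * (coeff (q+1) f)^2 else 0) := by
  have h0 : ∀ i, i ≤ q → i ≠ 1 → coeff i f = 0 := by
    intro i hi hi1
    have := hw0 i (by omega)
    rw [map_sub] at this
    rw [coeff_X, if_neg hi1] at this
    linear_combination this
  have h1 : coeff 1 f = 1 := by
    have := hw0 1 (by omega)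
    rw [map_sub, coeff_X, if_pos rfl] at this
    linear_combination this
  induction k with
  | zero =>
    intro m hm
    show coeff m (X : K⟦X⟧) = _
    simp
  | succ k ih =>
    intro m hm
    set a := coeff (q+1) f with ha
    set cK := ((Nat.choose k 2 * (q+1) : ℕ) : K) * a^2 with hcK
    set s := C (k:K) * (f - X) + C cK * X^(2*q+1) with hsdef
    have hscoeff : ∀ i, coeff i s = (k:K) * coeff i (f - X)
        + (if i = 2*q+1 then cK else 0) := by
      intro i
      rw [hsdef, map_add, coeff_C_mul, coeff_C_mul, coeff_X_pow]
      rw [mul_ite, mul_one, mul_zero]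
    have hs : ∀ i ≤ q, coeff i s = 0 := by
      intro i hi
      rw [hscoeff, hw0 i (by omega), if_neg (by omega : ¬i = 2*q+1)]
      ring
    have hag : ∀ i ≤ 2*q+1, coeff i (piter f k) = coeff i (X + s) := by
      intro i hi
      rw [ih i hi, map_add, hscoeff]
      ring
    have hstep : piter f (k+1) = pcomp f (piter f k) := rfl
    rw [hstep, pcomp_coeff_congr f hag hm, compB hq h0 h1 hs m hm]
    have hsq1 : coeff (q+1) s = (k:K) * a := by
      rw [hscoeff, if_neg (by omega : ¬q+1 = 2*q+1)]
      have hax : coeff (q+1) (f - X) = a := by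
        rw [map_sub, coeff_X, if_neg (by omega : ¬q+1 = 1), ha]
        ring
      rw [hax]
      ring
    have hfm : coeff m f = coeff m (X : K⟦X⟧) + coeff m (f - X) := by
      rw [map_sub]; ring
    have hch : Nat.choose (k+1) 2 = Nat.choose k 2 + k := by
      rw [Nat.choose_succ_succ, Nat.choose_one_right]
      show k + k.choose 2 = k.choose 2 + k
      omega
    rw [hscoeff, hsq1, hfm, hch]
    rcases eq_or_ne m (2*q+1) with rfl | hm2
    · rw [if_pos rfl, if_pos rfl, if_pos rfl, hcK]
      push_cast
      ring
    · rw [if_neg hm2, if_neg hm2, if_neg hm2]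
      push_cast
      ring

lemma ofPS_coeff_neg (u : K⟦X⟧) {j : ℤ} (hj : j < 0) :
    ((HahnSeries.ofPowerSeries ℤ K) u).coeff j = 0 := by
  rw [HahnSeries.ofPowerSeries_apply]
  apply HahnSeries.embDomain_notin_range
  rintro ⟨i, hi⟩
  have : (i : ℤ) = j := hi
  omega

lemma laurent_order_ge {u : K⟦X⟧} {N : ℕ} (h0 : ∀ i < N, coeff i u = 0)
    (hx : ((HahnSeries.ofPowerSeries ℤ K) u : LaurentSeries K) ≠ 0) :
    (N : ℤ) ≤ ((HahnSeries.ofPowerSeries ℤ K) u : LaurentSeries K).order := by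
  by_contra h
  push_neg at h
  apply (show ∀ x : LaurentSeries K, x ≠ 0 → x.coeff x.order ≠ 0 from fun x hx => by rw [← HahnSeries.leadingCoeff_eq]; exact HahnSeries.leadingCoeff_ne_zero.mpr hx) _ hx
  set j := ((HahnSeries.ofPowerSeries ℤ K) u : LaurentSeries K).order with hj
  rcases lt_or_ge j 0 with h'|h'
  · exact ofPS_coeff_neg u h'
  · lift j to ℕ using h' with j' hj'
    rw [HahnSeries.ofPowerSeries_apply_coeff]
    exact h0 j' (by exact_mod_cast h)

lemma laurent_order_spec {u : K⟦X⟧} {N : ℕ} (h0 : ∀ i < N, coeff i u = 0)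
    (hN : coeff N u ≠ 0) :
    ((HahnSeries.ofPowerSeries ℤ K) u : LaurentSeries K) ≠ 0 ∧
    ((HahnSeries.ofPowerSeries ℤ K) u : LaurentSeries K).order = (N : ℤ) ∧
    ((HahnSeries.ofPowerSeries ℤ K) u : LaurentSeries K).leadingCoeff = coeff N u := by
  set x := ((HahnSeries.ofPowerSeries ℤ K) u : LaurentSeries K) with hxdef
  have hxN : x.coeff (N : ℤ) = coeff N u := HahnSeries.ofPowerSeries_apply_coeff u N
  have hx0 : x ≠ 0 := by
    intro h
    apply hN
    rw [← hxN, h, HahnSeries.coeff_zero]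
  have hord : x.order = (N : ℤ) :=
    le_antisymm (HahnSeries.order_le_of_coeff_ne_zero (by rw [hxN]; exact hN))
      (laurent_order_ge h0 hx0)
  exact ⟨hx0, hord, by rw [HahnSeries.leadingCoeff_eq, hord, hxN]⟩

lemma inv_spec {x : LaurentSeries K} (hx : x ≠ 0) :
    x⁻¹.order = -x.order ∧ x⁻¹.leadingCoeff = x.leadingCoeff⁻¹ := by
  have hx' : x⁻¹ ≠ 0 := inv_ne_zero hx
  have h1 : x * x⁻¹ = 1 := mul_inv_cancel₀ hx
  have horder : (0 : ℤ) = x.order + x⁻¹.order := by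
    have h2 := HahnSeries.order_mul hx hx'
    rw [h1, HahnSeries.order_one] at h2
    exact h2
  refine ⟨by omega, ?_⟩
  have h2 := HahnSeries.coeff_mul_order_add_order x x⁻¹
  rw [h1, ← horder] at h2
  rw [HahnSeries.coeff_one, if_pos rfl] at h2
  exact (eq_inv_of_mul_eq_one_right h2.symm)

lemma main_laurent {q : ℕ} {u v : K⟦X⟧} {a : K} (ha : a ≠ 0)
    (hu0 : ∀ i < q+1, coeff i u = 0) (hua : coeff (q+1) u = a)
    (hv0 : ∀ i < q+1, coeff i v = 0) (hva : coeff (q+1) v = a)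
    (hd : ∀ i ≤ 2*q, coeff i (u - v) = 0) :
    (((HahnSeries.ofPowerSeries ℤ K) v : LaurentSeries K)⁻¹).coeff (-1)
      = (((HahnSeries.ofPowerSeries ℤ K) u : LaurentSeries K)⁻¹).coeff (-1)
        + coeff (2*q+1) (u - v) * a⁻¹ * a⁻¹ := by
  set U := ((HahnSeries.ofPowerSeries ℤ K) u : LaurentSeries K) with hUdef
  set V := ((HahnSeries.ofPowerSeries ℤ K) v : LaurentSeries K) with hVdef
  obtain ⟨hU0, hUo, hUl⟩ := laurent_order_spec hu0 (by rw [hua]; exact ha)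
  obtain ⟨hV0, hVo, hVl⟩ := laurent_order_spec hv0 (by rw [hva]; exact ha)
  have hUi := inv_spec hU0
  have hVi := inv_spec hV0
  set y := U⁻¹ * V⁻¹ with hydef
  have hy0 : y ≠ 0 := mul_ne_zero (inv_ne_zero hU0) (inv_ne_zero hV0)
  have hyo : y.order = -(2*(q:ℤ)+2) := by
    rw [hydef, HahnSeries.order_mul (inv_ne_zero hU0) (inv_ne_zero hV0),
      hUi.1, hVi.1, hUo, hVo]
    push_cast
    ring
  have hyl : y.coeff (-(2*(q:ℤ)+2)) = a⁻¹ * a⁻¹ := by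
    have h2 := HahnSeries.coeff_mul_order_add_order U⁻¹ V⁻¹
    rw [hUi.1, hVi.1, hUo, hVo, hUi.2, hVi.2, hUl, hVl, hua, hva] at h2
    rw [show -(2*(q:ℤ)+2) = -((q:ℕ)+1 : ℤ) + -((q:ℕ)+1 : ℤ) by push_cast; ring]
    exact h2
  have hid : V⁻¹ = U⁻¹ + (U - V) * y := by
    have hU0' : U ≠ 0 := hU0
    have hV0' : V ≠ 0 := hV0
    rw [hydef]
    field_simp
    ring
  rw [hid, HahnSeries.coeff_add]
  congr 1
  set δ := coeff (2*q+1) (u - v) with hδ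
  set E := (u - v) - PowerSeries.C δ * X^(2*q+1) with hEdef
  have hUV : U - V = HahnSeries.single ((2*q+1 : ℕ) : ℤ) δ + (HahnSeries.ofPowerSeries ℤ K) E := by
    rw [hUdef, hVdef, ← map_sub, show u - v = PowerSeries.C δ * X^(2*q+1) + E by rw [hEdef]; ring,
      map_add, map_mul, HahnSeries.ofPowerSeries_C, HahnSeries.ofPowerSeries_X_pow]
    congr 1
    rw [HahnSeries.C_mul_eq_smul]
    ext g
    simp [HahnSeries.coeff_single]
  rw [hUV, add_mul, HahnSeries.coeff_add]
  have hterm1 : ((HahnSeries.single ((2*q+1:ℕ):ℤ) δ) * y).coeff (-1) = δ * (a⁻¹ * a⁻¹) := by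
    rw [show (-1 : ℤ) = (-(2*(q:ℤ)+2)) + ((2*q+1:ℕ):ℤ) by push_cast; ring,
      HahnSeries.coeff_single_mul_add, hyl]
  have hterm2 : (((HahnSeries.ofPowerSeries ℤ K) E : LaurentSeries K) * y).coeff (-1) = 0 := by
    by_cases hE0 : E = 0
    · rw [hE0, map_zero, zero_mul, HahnSeries.coeff_zero]
    · have hE0' : ((HahnSeries.ofPowerSeries ℤ K) E : LaurentSeries K) ≠ 0 :=
        fun h => hE0 (HahnSeries.ofPowerSeries_injective (by rw [h, map_zero]))
      have hEc : ∀ i < 2*q+2, coeff i E = 0 := by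
        intro i hi
        rw [hEdef, map_sub, PowerSeries.coeff_C_mul, PowerSeries.coeff_X_pow]
        rcases eq_or_ne i (2*q+1) with rfl|h
        · rw [if_pos rfl, hδ]
          ring
        · rw [if_neg h, hd i (by omega)]
          ring
      apply HahnSeries.coeff_eq_zero_of_lt_order
      rw [HahnSeries.order_mul hE0' hy0, hyo]
      have hge := laurent_order_ge hEc hE0'
      push_cast at hge
      omega
  rw [hterm1, hterm2, add_zero, hδ]
  ring

end StmtAux16

theorem stmt16 {K : Type*} [Field K] [CharP K 2] (q : ℕ) (hq : 1 ≤ q)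
    (f : PowerSeries K) (hmult : (f - PowerSeries.X).order = ((q + 1 : ℕ) : ℕ∞))
    (n : ℕ) (hn : 1 ≤ n) (hodd : Odd n) :
    ind (piter f n) = if Even q ∧ n % 4 = 3 then ind f + 1 else ind f := by
  classical
  open PowerSeries StmtAux16 in
  obtain ⟨hane, hlow⟩ := (PowerSeries.order_eq_nat).mp hmult
  have two0 : (2 : K) = 0 := by exact_mod_cast CharP.cast_eq_zero K 2
  obtain ⟨m, hm⟩ := hodd
  have hm' : n = 2*m+1 := by omega
  subst hm'
  have ncast : ((2*m+1 : ℕ) : K) = 1 := by push_cast; rw [two0]; ring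
  -- basic coefficients
  have hwq1 : coeff (q+1) (f - PowerSeries.X) = coeff (q+1) f := by
    rw [map_sub, PowerSeries.coeff_X, if_neg (by omega : ¬q+1 = 1)]
    ring
  set a : K := coeff (q+1) f with hadef
  have ha : a ≠ 0 := hwq1 ▸ hane
  have hpc := piter_coeff (K := K) hq hlow (2*m+1)
  -- u := X - f ,  v := X - piter f (2*m+1)
  set u := (PowerSeries.X : K⟦X⟧) - f with hudef
  set v := (PowerSeries.X : K⟦X⟧) - piter f (2*m+1) with hvdef
  have hucoeff : ∀ i, coeff i u = -(coeff i (f - PowerSeries.X)) := by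
    intro i
    rw [hudef, map_sub, map_sub]
    ring
  have hu0 : ∀ i < q+1, coeff i u = 0 := by
    intro i hi
    rw [hucoeff, hlow i hi, neg_zero]
  have hua : coeff (q+1) u = a := by
    rw [hucoeff, hwq1]
    exact CharTwo.neg_eq a
  have hvcoeff : ∀ i, i ≤ 2*q+1 → coeff i v =
      coeff i (PowerSeries.X : K⟦X⟧) - (coeff i (PowerSeries.X : K⟦X⟧)
        + ((2*m+1 : ℕ) : K) * coeff i (f - PowerSeries.X)
        + (if i = 2*q+1 then ((Nat.choose (2*m+1) 2 * (q+1) : ℕ) : K) * a^2 else 0)) := by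
    intro i hi
    rw [hvdef, map_sub, hpc i hi]
  have hv0 : ∀ i < q+1, coeff i v = 0 := by
    intro i hi
    rw [hvcoeff i (by omega), hlow i hi, if_neg (by omega : ¬i = 2*q+1)]
    ring
  have hva : coeff (q+1) v = a := by
    rw [hvcoeff (q+1) (by omega), if_neg (by omega : ¬q+1 = 2*q+1), hwq1, ncast]
    linear_combination (-a) * two0
  have hd : ∀ i ≤ 2*q, coeff i (u - v) = 0 := by
    intro i hi
    rw [map_sub, hucoeff, hvcoeff i (by omega), if_neg (by omega : ¬i = 2*q+1), ncast]
    ring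
  have hdval : coeff (2*q+1) (u - v) = ((Nat.choose (2*m+1) 2 * (q+1) : ℕ) : K) * a^2 := by
    rw [map_sub, hucoeff, hvcoeff (2*q+1) le_rfl, if_pos rfl, ncast]
    ring
  have hmain := main_laurent ha hu0 hua hv0 hva hd
  have hind : ind (piter f (2*m+1)) = ind f + ((Nat.choose (2*m+1) 2 * (q+1) : ℕ) : K) := by
    rw [ind, ind, ← hudef, ← hvdef, hmain, hdval]
    field_simp
  rw [hind]
  -- now the arithmetic of the correction term
  have hch : Nat.choose (2*m+1) 2 = (2*m+1)*m := by
    rw [Nat.choose_two_right, Nat.add_sub_cancel,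
      show (2*m+1)*(2*m) = 2*((2*m+1)*m) by ring, Nat.mul_div_cancel_left _ (by norm_num)]
  rw [hch]
  rcases Nat.even_or_odd m with hme | hmo
  · obtain ⟨r, hr⟩ := hme
    have hcond : ¬(Even q ∧ (2*m+1) % 4 = 3) := by
      rintro ⟨-, h4⟩
      omega
    rw [if_neg hcond]
    have : (((2*m+1)*m*(q+1) : ℕ) : K) = 0 := by
      subst hr
      push_cast
      linear_combination ((4*(r:K)+1)*(r:K)*((q:K)+1)) * two0
    rw [this, add_zero]
  · obtain ⟨r, hr⟩ := hmo
    rcases Nat.even_or_odd q with hqe | hqo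
    · obtain ⟨t, ht⟩ := hqe
      have hcond : Even q ∧ (2*m+1) % 4 = 3 := ⟨⟨t, ht⟩, by omega⟩
      rw [if_pos hcond]
      have : (((2*m+1)*m*(q+1) : ℕ) : K) = 1 := by
        subst hr; subst ht
        push_cast
        linear_combination (8*(r:K)^2*(t:K) + 10*(r:K)*(t:K) + 3*(t:K) + 4*(r:K)^2 + 5*(r:K) + 1) * two0
      rw [this]
    · obtain ⟨t, ht⟩ := hqo
      have hcond : ¬(Even q ∧ (2*m+1) % 4 = 3) := by
        rintro ⟨hqe, -⟩
        rw [Nat.even_iff] at hqe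
        omega
      rw [if_neg hcond]
      have : (((2*m+1)*m*(q+1) : ℕ) : K) = 0 := by
        subst ht
        push_cast
        linear_combination ((2*(m:K)+1)*(m:K)*((t:K)+1)) * two0
      rw [this, add_zero]
end

section
/- Let p be an odd prime and F_1 = ℤ_(p)[x_0, x_1]. Let q be an integer with 1 ≤ q ≤ p−1. Define sequences α_m, β_m ∈ F_1 by α_1 = x_0, β_1 = x_1, and for m ≥ 1: α_{m+1} = x_0(qm+1)α_m and β_{m+1} = [x_0^2·binom(qm+1, 2) + x_1(qm+1)]·α_m + x_0(q(m+1)+1)·β_m. Then α_p ≡ 0 mod pF_1 and β_p ≡ x_0^{p−1}(x_0^2·(q+1)/2 − x_1) mod pF_1. -/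
instance spanIntPrime (p : ℕ) [hp : Fact p.Prime] : (Ideal.span {(p : ℤ)}).IsPrime :=
  (Ideal.span_singleton_prime (by exact_mod_cast hp.out.ne_zero)).mpr
    (Nat.prime_iff_prime_int.mp hp.out)

/-- The localization of ℤ at the prime p, i.e. ℤ_(p) = {m/n ∈ ℚ : p ∤ n}. -/
abbrev Zploc (p : ℕ) [Fact p.Prime] := Localization.AtPrime (Ideal.span {(p : ℤ)})

/- ### Auxiliary lemmas -/

lemma stmt19.two_choose_two (k : ℕ) : 2 * ((k+1).choose 2) = (k+1) * k := by
  rw [Nat.choose_two_right, Nat.add_sub_cancel, Nat.mul_comm (k+1) k]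
  exact Nat.two_mul_div_two_of_even (Nat.even_mul_succ_self k) |>.symm ▸ rfl

lemma stmt19.castInjIcc {p : ℕ} [hp : Fact p.Prime] {j j' : ℕ} (hj : j ∈ Finset.Icc 1 p)
    (hj' : j' ∈ Finset.Icc 1 p) (h : (j : ZMod p) = (j' : ZMod p)) : j = j' := by
  have h1 : j % p = j' % p := (ZMod.natCast_eq_natCast_iff j j' p).mp h
  simp only [Finset.mem_Icc] at hj hj'
  have hp0 : 0 < p := hp.out.pos
  rcases Nat.lt_or_ge j p with h2 | h2 <;> rcases Nat.lt_or_ge j' p with h3 | h3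
  · rw [Nat.mod_eq_of_lt h2, Nat.mod_eq_of_lt h3] at h1; exact h1
  · have : j' = p := le_antisymm hj'.2 h3
    subst this; rw [Nat.mod_eq_of_lt h2, Nat.mod_self] at h1; omega
  · have : j = p := le_antisymm hj.2 h2
    subst this; rw [Nat.mod_self, Nat.mod_eq_of_lt h3] at h1; omega
  · omega

lemma stmt19.prodEraseZero {p : ℕ} [hp : Fact p.Prime] :
    ∏ x ∈ (Finset.univ.erase (0 : ZMod p)), x = -1 := by
  have hinj : Set.InjOn (fun j : ℕ => (j : ZMod p)) (Finset.Ico 1 p) := by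
    intro a ha b hb h
    simp only [Finset.coe_Ico, Set.mem_Ico] at ha hb
    exact stmt19.castInjIcc (by simp [Finset.mem_Icc]; omega)
      (by simp [Finset.mem_Icc]; omega) h
  have himg : (Finset.Ico 1 p).image (fun j : ℕ => (j : ZMod p))
      = Finset.univ.erase (0 : ZMod p) := by
    apply Finset.eq_of_subset_of_card_le
    · intro x hx
      simp only [Finset.mem_image, Finset.mem_Ico] at hx
      obtain ⟨j, hj, rfl⟩ := hx
      refine Finset.mem_erase.mpr ⟨?_, Finset.mem_univ _⟩
      intro h0
      have h1 := (ZMod.natCast_eq_zero_iff j p).mp h0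
      have := Nat.le_of_dvd (by omega) h1
      omega
    · rw [Finset.card_erase_of_mem (Finset.mem_univ _), Finset.card_univ, ZMod.card,
        Finset.card_image_of_injOn hinj, Nat.card_Ico]
  rw [← himg, Finset.prod_image (fun a ha b hb => hinj ha hb)]
  exact ZMod.prod_Ico_one_prime p

section R0
variable {p q : ℕ} [hp : Fact p.Prime]

noncomputable def stmt19.r0 (p q : ℕ) [Fact p.Prime] : ℕ := (-(q : ZMod p)⁻¹).val

open stmt19 in
lemma stmt19.q_ne_zero (hqp : ¬ p ∣ q) : (q : ZMod p) ≠ 0 :=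
  fun h => hqp ((ZMod.natCast_eq_zero_iff q p).mp h)

open stmt19 in
lemma stmt19.r0_cast : ((r0 p q : ℕ) : ZMod p) = -(q : ZMod p)⁻¹ := ZMod.natCast_zmod_val _

open stmt19 in
lemma stmt19.r0_mem (hqp : ¬ p ∣ q) : r0 p q ∈ Finset.Icc 1 p := by
  have hz : (-(q : ZMod p)⁻¹) ≠ 0 := by
    simp [inv_ne_zero (q_ne_zero hqp)]
  have h1 : (r0 p q) ≠ 0 := fun h => hz ((ZMod.val_eq_zero _).mp h)
  have h2 : (r0 p q) < p := ZMod.val_lt _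
  simp [Finset.mem_Icc]; omega

open stmt19 in
lemma stmt19.r0_lt (hqp : ¬ p ∣ q) : r0 p q < p := ZMod.val_lt _

open stmt19 in
lemma stmt19.g_r0 (hqp : ¬ p ∣ q) : ((q * r0 p q + 1 : ℕ) : ZMod p) = 0 := by
  push_cast
  rw [r0_cast, mul_neg, mul_inv_cancel₀ (q_ne_zero hqp)]
  ring

open stmt19 in
lemma stmt19.g_eq_zero_iff (hqp : ¬ p ∣ q) {j : ℕ} (hj : j ∈ Finset.Icc 1 p) :
    ((q * j + 1 : ℕ) : ZMod p) = 0 ↔ j = r0 p q := by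
  have hq := q_ne_zero (p := p) hqp
  have hqq : (q : ZMod p)⁻¹ * q = 1 := inv_mul_cancel₀ hq
  constructor
  · intro h
    push_cast at h
    have h2 : (j : ZMod p) = -(q : ZMod p)⁻¹ := by
      linear_combination (q : ZMod p)⁻¹ * h - (j : ZMod p) * hqq
    exact castInjIcc hj (r0_mem hqp) (h2.trans (r0_cast).symm)
  · rintro rfl; exact g_r0 hqp

open stmt19 in
lemma stmt19.prod_erase_r0 (hqp : ¬ p ∣ q) :
    ∏ j ∈ (Finset.Icc 1 p).erase (r0 p q), ((q * j + 1 : ℕ) : ZMod p) = -1 := by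
  have hq := q_ne_zero (p := p) hqp
  have hqq : (q : ZMod p)⁻¹ * q = 1 := inv_mul_cancel₀ hq
  have hinj : Set.InjOn (fun j : ℕ => ((q * j + 1 : ℕ) : ZMod p)) (Finset.Icc 1 p) := by
    intro a ha b hb h
    simp only [Finset.coe_Icc, Set.mem_Icc] at ha hb
    push_cast at h
    have h2 : (a : ZMod p) = b := by
      linear_combination (q : ZMod p)⁻¹ * h + ((b : ZMod p) - a) * hqq
    exact castInjIcc (Finset.mem_Icc.mpr ha) (Finset.mem_Icc.mpr hb) h2
  have hsub : ((Finset.Icc 1 p).erase (r0 p q) : Set ℕ) ⊆ (Finset.Icc 1 p : Set ℕ) :=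
    Finset.coe_subset.mpr (Finset.erase_subset _ _)
  have himg : ((Finset.Icc 1 p).erase (r0 p q)).image (fun j : ℕ => ((q * j + 1 : ℕ) : ZMod p))
      = Finset.univ.erase (0 : ZMod p) := by
    apply Finset.eq_of_subset_of_card_le
    · intro x hx
      simp only [Finset.mem_image] at hx
      obtain ⟨j, hj, rfl⟩ := hx
      refine Finset.mem_erase.mpr ⟨?_, Finset.mem_univ _⟩
      intro h0
      exact (Finset.ne_of_mem_erase hj) ((g_eq_zero_iff hqp (Finset.mem_of_mem_erase hj)).mp h0)
    · rw [Finset.card_erase_of_mem (Finset.mem_univ _), Finset.card_univ, ZMod.card,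
        Finset.card_image_of_injOn (hinj.mono hsub),
        Finset.card_erase_of_mem (r0_mem hqp), Nat.card_Icc]
      omega
  rw [← prodEraseZero (p := p), ← himg,
    Finset.prod_image (fun a ha b hb => (hinj.mono hsub) ha hb)]

open stmt19 in
lemma stmt19.cast_prod_zero (hqp : ¬ p ∣ q) {r : ℕ} (hr : r ∈ Finset.Icc 1 p)
    (hne : r ≠ r0 p q) :
    ((∏ j ∈ (Finset.Icc 1 p).erase r, (q * j + 1) : ℕ) : ZMod p) = 0 := by
  rw [Nat.cast_prod]
  exact Finset.prod_eq_zero (Finset.mem_erase.mpr ⟨fun h => hne h.symm, r0_mem hqp⟩) (g_r0 hqp)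

open stmt19 in
lemma stmt19.sumB (hqp : ¬ p ∣ q) :
    (∑ r ∈ Finset.Icc 1 p,
      ((∏ j ∈ (Finset.Icc 1 p).erase r, (q * j + 1) : ℕ) : ZMod p)) = -1 := by
  rw [Finset.sum_eq_single_of_mem (r0 p q) (r0_mem hqp)
    (fun r _ hne => cast_prod_zero hqp (by assumption) hne)]
  rw [Nat.cast_prod]
  exact prod_erase_r0 hqp

open stmt19 in
lemma stmt19.q_r0 (hqp : ¬ p ∣ q) : (q : ZMod p) * (r0 p q : ℕ) = -1 := by
  have h := g_r0 (p := p) (q := q) hqp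
  push_cast at h
  linear_combination h

open stmt19 in
lemma stmt19.sumB2 (hqp : ¬ p ∣ q) :
    (∑ r ∈ Finset.Icc 1 p, ((q * (r - 1) * ∏ j ∈ (Finset.Icc 1 p).erase r, (q * j + 1) : ℕ) :
      ZMod p)) = (q : ZMod p) + 1 := by
  rw [Finset.sum_eq_single_of_mem (r0 p q) (r0_mem hqp) (fun r hr hne => by
    rw [Nat.cast_mul, cast_prod_zero hqp hr hne, mul_zero])]
  rw [Nat.cast_mul, Nat.cast_prod]
  have h1 : 1 ≤ r0 p q := (Finset.mem_Icc.mp (r0_mem (p := p) hqp)).1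
  have h2 : ((q * (r0 p q - 1) : ℕ) : ZMod p) = (q : ZMod p) * ((r0 p q : ZMod p) - 1) := by
    push_cast [Nat.cast_sub h1]
    ring
  rw [h2]
  have h3 : (∏ j ∈ (Finset.Icc 1 p).erase (r0 p q), ((q * j + 1 : ℕ) : ZMod p)) = -1 :=
    prod_erase_r0 hqp
  push_cast at h3 ⊢
  rw [h3]
  linear_combination -(q_r0 hqp)

end R0

lemma stmt19.two_isUnit (p : ℕ) [hp : Fact p.Prime] (hodd : Odd p) :
    IsUnit (2 : Zploc p) := by
  have h : (2 : Zploc p) = algebraMap ℤ (Zploc p) 2 := by simp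
  rw [h, IsLocalization.AtPrime.isUnit_to_map_iff (Zploc p) (Ideal.span {(p : ℤ)})]
  show (2 : ℤ) ∉ Ideal.span {(p : ℤ)}
  intro hmem
  rw [Ideal.mem_span_singleton] at hmem
  have hle : (p : ℤ) ≤ 2 := Int.le_of_dvd (by norm_num) hmem
  have h2 : 2 ≤ p := hp.out.two_le
  have hp2 : p = 2 := by omega
  rw [hp2] at hodd
  exact (Nat.not_odd_iff_even.mpr (by norm_num)) hodd

lemma stmt19.dvd_transfer (p : ℕ) [Fact p.Prime] {t : ℤ} (h : (p : ℤ) ∣ t) :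
    (p : Zploc p) ∣ ((t : ℤ) : Zploc p) := by
  have := map_dvd (algebraMap ℤ (Zploc p)) h
  simpa using this

set_option maxHeartbeats 1000000 in
theorem stmt19 (p : ℕ) [Fact p.Prime] (hodd : Odd p)
    (q : ℕ) (hq1 : 1 ≤ q) (hqp : ¬ p ∣ q) (hq2 : q ≤ p - 1)
    (α β : ℕ → MvPolynomial (Fin 2) (Zploc p))
    (hα1 : α 1 = MvPolynomial.X 0) (hβ1 : β 1 = MvPolynomial.X 1)
    (hα : ∀ m, 1 ≤ m → α (m + 1) =
      MvPolynomial.X 0 * ((q * m + 1 : ℕ) : MvPolynomial (Fin 2) (Zploc p)) * α m)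
    (hβ : ∀ m, 1 ≤ m → β (m + 1) =
      ((MvPolynomial.X 0) ^ 2 * (((q * m + 1).choose 2 : ℕ) : MvPolynomial (Fin 2) (Zploc p)) +
          MvPolynomial.X 1 * ((q * m + 1 : ℕ) : MvPolynomial (Fin 2) (Zploc p))) * α m +
        MvPolynomial.X 0 * ((q * (m + 1) + 1 : ℕ) : MvPolynomial (Fin 2) (Zploc p)) * β m) :
    α p ∈ Ideal.span {(p : MvPolynomial (Fin 2) (Zploc p))} ∧
    β p - (MvPolynomial.X 0) ^ (p - 1) *
        ((MvPolynomial.X 0) ^ 2 *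
          MvPolynomial.C (Ring.inverse (2 : Zploc p) * ((q : Zploc p) + 1)) -
          MvPolynomial.X 1)
      ∈ Ideal.span {(p : MvPolynomial (Fin 2) (Zploc p))} := by
  classical
  have hp : Fact p.Prime := ‹_›
  have hp1 : 1 ≤ p := hp.out.pos
  set inv2 : Zploc p := Ring.inverse (2 : Zploc p) with hinv2def
  have h2u : IsUnit (2 : Zploc p) := stmt19.two_isUnit p hodd
  have hinv2 : inv2 * 2 = 1 := Ring.inverse_mul_cancel _ h2u
  set X0 : MvPolynomial (Fin 2) (Zploc p) := MvPolynomial.X 0 with hX0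
  set X1 : MvPolynomial (Fin 2) (Zploc p) := MvPolynomial.X 1 with hX1
  have hC2 : MvPolynomial.C inv2 * (2 : MvPolynomial (Fin 2) (Zploc p)) = 1 := by
    rw [show (2 : MvPolynomial (Fin 2) (Zploc p)) = MvPolynomial.C 2 from
      (map_ofNat MvPolynomial.C 2).symm, ← map_mul, hinv2, map_one]
  have hchoose : ∀ k : ℕ, (((k + 1).choose 2 : ℕ) : MvPolynomial (Fin 2) (Zploc p))
      = MvPolynomial.C inv2 * ((k * (k + 1) : ℕ) : MvPolynomial (Fin 2) (Zploc p)) := by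
    intro k
    have h1 : 2 * ((k + 1).choose 2) = (k + 1) * k := stmt19.two_choose_two k
    have h2 : ((2 * ((k + 1).choose 2) : ℕ) : MvPolynomial (Fin 2) (Zploc p))
        = (((k + 1) * k : ℕ) : MvPolynomial (Fin 2) (Zploc p)) := by rw [h1]
    push_cast at h2 ⊢
    linear_combination MvPolynomial.C inv2 * h2
      - (((k + 1).choose 2 : ℕ) : MvPolynomial (Fin 2) (Zploc p)) * hC2
  -- closed form for α
  have halpha : ∀ m, 1 ≤ m → α m =
      ((∏ j ∈ Finset.Ico 1 m, (q * j + 1) : ℕ) : MvPolynomial (Fin 2) (Zploc p)) * X0 ^ m := by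
    intro m hm
    induction m, hm using Nat.le_induction with
    | base => simp [hα1]
    | succ m hm ih =>
      rw [hα m hm, ih, Finset.prod_Ico_succ_top hm]
      push_cast
      ring
  -- closed form for β
  have hbeta : ∀ m, 1 ≤ m → β m = X0 ^ (m - 1) *
      ∑ r ∈ Finset.Icc 1 m,
        (X0 ^ 2 * MvPolynomial.C inv2 * ((q * (r - 1) : ℕ) : MvPolynomial (Fin 2) (Zploc p))
            + X1) *
          ((∏ j ∈ (Finset.Icc 1 m).erase r, (q * j + 1) : ℕ)
            : MvPolynomial (Fin 2) (Zploc p)) := by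
    intro m hm
    induction m, hm using Nat.le_induction with
    | base => simp [hβ1]
    | succ m hm ih =>
      rw [hβ m hm, halpha m hm, ih]
      have hx : X0 ^ m = X0 ^ (m - 1) * X0 := by
        conv_lhs => rw [show m = (m - 1) + 1 by omega]
        rw [pow_succ]
      rw [Finset.sum_Icc_succ_top (by omega : 1 ≤ m + 1)]
      have hsum : ∑ r ∈ Finset.Icc 1 m,
          (X0 ^ 2 * MvPolynomial.C inv2 * ((q * (r - 1) : ℕ) : MvPolynomial (Fin 2) (Zploc p))
              + X1) *
            ((∏ j ∈ (Finset.Icc 1 (m + 1)).erase r, (q * j + 1) : ℕ)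
              : MvPolynomial (Fin 2) (Zploc p))
          = (∑ r ∈ Finset.Icc 1 m,
              (X0 ^ 2 * MvPolynomial.C inv2 *
                  ((q * (r - 1) : ℕ) : MvPolynomial (Fin 2) (Zploc p)) + X1) *
                ((∏ j ∈ (Finset.Icc 1 m).erase r, (q * j + 1) : ℕ)
                  : MvPolynomial (Fin 2) (Zploc p)))
            * ((q * (m + 1) + 1 : ℕ) : MvPolynomial (Fin 2) (Zploc p)) := by
        rw [Finset.sum_mul]
        refine Finset.sum_congr rfl (fun r hr => ?_)
        have hr' := Finset.mem_Icc.mp hr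
        have hset : (Finset.Icc 1 (m + 1)).erase r
            = insert (m + 1) ((Finset.Icc 1 m).erase r) := by
          ext x
          simp only [Finset.mem_erase, Finset.mem_Icc, Finset.mem_insert]
          omega
        rw [hset, Finset.prod_insert (by simp)]
        push_cast
        ring
      have htop : (Finset.Icc 1 (m + 1)).erase (m + 1) = Finset.Icc 1 m := by
        ext x
        simp only [Finset.mem_erase, Finset.mem_Icc]
        omega
      have htop2 : Finset.Icc 1 m = Finset.Ico 1 (m + 1) := (Finset.Ico_add_one_right_eq_Icc 1 m).symm
      rw [hsum, htop, Nat.add_sub_cancel, htop2, Finset.prod_Ico_succ_top hm,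
        hchoose (q * m), hx]
      push_cast
      ring
  refine ⟨?_, ?_⟩
  · -- α p ∈ span {p}
    have hr0mem : stmt19.r0 p q ∈ Finset.Ico 1 p := by
      have h1 := (Finset.mem_Icc.mp (stmt19.r0_mem (p := p) hqp)).1
      have h2 := stmt19.r0_lt (p := p) (q := q) hqp
      simp [Finset.mem_Ico]; omega
    have hdvd1 : p ∣ (q * stmt19.r0 p q + 1) :=
      (ZMod.natCast_eq_zero_iff _ p).mp (stmt19.g_r0 hqp)
    have hdvdN : p ∣ ∏ j ∈ Finset.Ico 1 p, (q * j + 1) :=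
      hdvd1.trans (Finset.dvd_prod_of_mem (fun j => q * j + 1) hr0mem)
    obtain ⟨k, hk⟩ := hdvdN
    refine Ideal.mem_span_singleton.mpr ⟨(k : MvPolynomial (Fin 2) (Zploc p)) * X0 ^ p, ?_⟩
    rw [halpha p hp1, hk]
    push_cast
    ring
  · -- β p case
    set T1 : ℕ := ∑ r ∈ Finset.Icc 1 p, ∏ j ∈ (Finset.Icc 1 p).erase r, (q * j + 1) with hT1
    set T2 : ℕ := ∑ r ∈ Finset.Icc 1 p,
      q * (r - 1) * ∏ j ∈ (Finset.Icc 1 p).erase r, (q * j + 1) with hT2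
    have hd1 : (p : Zploc p) ∣ ((T1 : Zploc p) + 1) := by
      have hz : (p : ℤ) ∣ ((T1 : ℤ) + 1) := by
        rw [← ZMod.intCast_zmod_eq_zero_iff_dvd]
        push_cast
        rw [hT1, Nat.cast_sum]
        push_cast
        have := stmt19.sumB (p := p) (q := q) hqp
        push_cast at this
        rw [this]
        ring
      have := stmt19.dvd_transfer p hz
      push_cast at this
      exact this
    have hd2 : (p : Zploc p) ∣ (inv2 * (T2 : Zploc p) - inv2 * ((q : Zploc p) + 1)) := by
      have hz : (p : ℤ) ∣ ((T2 : ℤ) - ((q : ℤ) + 1)) := by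
        rw [← ZMod.intCast_zmod_eq_zero_iff_dvd]
        push_cast
        rw [hT2, Nat.cast_sum]
        push_cast
        have := stmt19.sumB2 (p := p) (q := q) hqp
        push_cast at this
        rw [this]
        ring
      have h := stmt19.dvd_transfer p hz
      push_cast at h
      have h2 : inv2 * (T2 : Zploc p) - inv2 * ((q : Zploc p) + 1)
          = inv2 * ((T2 : Zploc p) - ((q : Zploc p) + 1)) := by ring
      rw [h2]
      exact h.mul_left inv2
    obtain ⟨c1, hc1⟩ := hd1
    obtain ⟨c2, hc2⟩ := hd2
    have hsum2 : (∑ r ∈ Finset.Icc 1 p,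
        (X0 ^ 2 * MvPolynomial.C inv2 * ((q * (r - 1) : ℕ) : MvPolynomial (Fin 2) (Zploc p))
            + X1) *
          ((∏ j ∈ (Finset.Icc 1 p).erase r, (q * j + 1) : ℕ)
            : MvPolynomial (Fin 2) (Zploc p)))
        = X0 ^ 2 * MvPolynomial.C inv2 * ((T2 : ℕ) : MvPolynomial (Fin 2) (Zploc p))
          + X1 * ((T1 : ℕ) : MvPolynomial (Fin 2) (Zploc p)) := by
      rw [hT1, hT2, Nat.cast_sum, Nat.cast_sum, Finset.mul_sum, Finset.mul_sum,
        ← Finset.sum_add_distrib]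
      refine Finset.sum_congr rfl (fun r hr => ?_)
      push_cast
      ring
    have e2 : MvPolynomial.C inv2 * ((T2 : ℕ) : MvPolynomial (Fin 2) (Zploc p))
        - MvPolynomial.C (inv2 * ((q : Zploc p) + 1))
        = MvPolynomial.C ((p : ℕ) : Zploc p) * MvPolynomial.C c2 := by
      rw [← map_natCast (MvPolynomial.C : Zploc p →+* MvPolynomial (Fin 2) (Zploc p)) T2,
        ← map_mul, ← map_sub, hc2, map_mul]
    have e1 : ((T1 : ℕ) : MvPolynomial (Fin 2) (Zploc p)) + 1
        = MvPolynomial.C ((p : ℕ) : Zploc p) * MvPolynomial.C c1 := by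
      rw [← map_natCast (MvPolynomial.C : Zploc p →+* MvPolynomial (Fin 2) (Zploc p)) T1,
        ← map_one (MvPolynomial.C : Zploc p →+* MvPolynomial (Fin 2) (Zploc p)),
        ← map_add, hc1, map_mul]
    refine Ideal.mem_span_singleton.mpr
      ⟨X0 ^ (p - 1) * (X0 ^ 2 * MvPolynomial.C c2 + X1 * MvPolynomial.C c1), ?_⟩
    have hpC : ((p : ℕ) : MvPolynomial (Fin 2) (Zploc p))
        = MvPolynomial.C ((p : ℕ) : Zploc p) :=
      (map_natCast (MvPolynomial.C : Zploc p →+* MvPolynomial (Fin 2) (Zploc p)) p).symm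
    rw [hbeta p hp1, hsum2, hpC]
    linear_combination (X0 ^ (p - 1) * X0 ^ 2) * e2 + (X0 ^ (p - 1) * X1) * e1
end
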